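/- arXiv:2309.15819 — 3 statements merged into one kernel-verified Lean document; each statement's English description precedes it below -/
import Mathlib

section
/- Let n ≥ 1 and let ψ ∈ L²(ℝⁿ) be such that {ψ_{(a,b)}}_{(a,b)∈ℝ^{n+1}_+} is a continuous Parseval frame for L²(ℝⁿ). Then a bounded set K ⊆ L²(ℝⁿ) is totally bounded (i.e., has compact closure) if and only if lim_{R→∞} sup_{f∈K} ∫_{D((1,0),R)^c} |⟨f, ψ_{(a,b)}⟩|² dλ(a,b) = 0. -/
open MeasureTheory Metric Set
open scoped ENNReal

noncomputable section

abbrev Euc (n : ℕ) := EuclideanSpace ℝ (Fin n)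
abbrev L2 (n : ℕ) := Lp ℂ 2 (volume : Measure (Euc n))

def lamMeas (n : ℕ) : Measure (ℝ × Euc n) :=
  (((volume : Measure ℝ).restrict (Set.Ioi (0:ℝ))).prod (volume : Measure (Euc n))).withDensity
    (fun p => ENNReal.ofReal (p.1 ^ (-((n : ℝ) + 1))))

def arcosh (x : ℝ) : ℝ := Real.log (x + Real.sqrt (x ^ 2 - 1))

def hypDist {n : ℕ} (p q : ℝ × Euc n) : ℝ :=
  arcosh (1 + (|p.1 - q.1| ^ 2 + ‖p.2 - q.2‖ ^ 2) / (2 * p.1 * q.1))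

def basePt (n : ℕ) : ℝ × Euc n := (1, 0)

def dil {n : ℕ} (ψ : Euc n → ℂ) (p : ℝ × Euc n) : Euc n → ℂ :=
  fun x => (p.1 ^ (-(n : ℝ) / 2) : ℝ) • ψ ((p.1)⁻¹ • (x - p.2))

def dilOne {n : ℕ} (φ : Euc n → ℂ) (p : ℝ × Euc n) : Euc n → ℂ :=
  fun x => (p.1 ^ (-(n : ℝ)) : ℝ) • φ ((p.1)⁻¹ • (x - p.2))

def pairing {n : ℕ} (f g : Euc n → ℂ) : ℂ :=
  ∫ x, f x * (starRingEnd ℂ) (g x)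

open scoped Classical in
def toL2 {n : ℕ} (f : Euc n → ℂ) : L2 n :=
  if h : MemLp f 2 (volume : Measure (Euc n)) then h.toLp f else 0

def IsParsevalFrame {n : ℕ} (ψ : Euc n → ℂ) : Prop :=
  ∀ f : L2 n, ‖f‖ ^ 2 = ∫ p, ‖pairing (⇑f) (dil ψ p)‖ ^ 2 ∂(lamMeas n)

/-- The region of ℝ^{n+1}_+ outside the hyperbolic ball D(q, R). -/
def farFrom {n : ℕ} (q : ℝ × Euc n) (R : ℝ) : Set (ℝ × Euc n) :=
  {p | 0 < p.1 ∧ R ≤ hypDist q p}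

/-- The Carleson tent T(B(c,r)). -/
def tent {n : ℕ} (c : Euc n) (r : ℝ) : Set (ℝ × Euc n) :=
  {p | 0 < p.1 ∧ ‖c - p.2‖ < r - p.1}

/-- The Carleson box function Cμ(x) = sup_{(a,b) ∈ V_x} μ(T(B(b,a)))/|B(b,a)|, valued in [0,∞]. -/
def carlesonSup {n : ℕ} (μ : Measure (ℝ × Euc n)) (x : Euc n) : ℝ≥0∞ :=
  ⨆ (p : ℝ × Euc n) (_ : 0 < p.1 ∧ ‖x - p.2‖ < p.1),
    μ (tent p.2 p.1) / (volume : Measure (Euc n)) (Metric.ball p.2 p.1)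

/-- μ is a Carleson measure on ℝ^{n+1}_+. -/
def IsCarleson {n : ℕ} (μ : Measure (ℝ × Euc n)) : Prop :=
  ∃ C : ℝ≥0∞, C ≠ ⊤ ∧ ∀ p : ℝ × Euc n, 0 < p.1 →
    μ (tent p.2 p.1) ≤ C * (volume : Measure (Euc n)) (Metric.ball p.2 p.1)

/-- μ is a vanishing Carleson measure on ℝ^{n+1}_+. -/
def IsVanishingCarleson {n : ℕ} (μ : Measure (ℝ × Euc n)) : Prop :=
  IsCarleson μ ∧
  ∀ ε : ℝ, 0 < ε → ∃ R : ℝ, ∀ p ∈ farFrom (basePt n) R,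
    μ (tent p.2 p.1) ≤ ENNReal.ofReal ε * (volume : Measure (Euc n)) (Metric.ball p.2 p.1)

/-- A bounded subset of C_c^∞(ℝⁿ): uniformly compactly supported smooth functions with
all derivatives uniformly bounded. -/
def IsBoundedSmoothFamily {n : ℕ} (B : Set (Euc n → ℂ)) : Prop :=
  (∀ g ∈ B, ContDiff ℝ (⊤ : ℕ∞) g) ∧
  (∃ R : ℝ, ∀ g ∈ B, tsupport g ⊆ Metric.closedBall 0 R) ∧
  (∀ k : ℕ, ∃ M : ℝ, ∀ g ∈ B, ∀ x, ‖iteratedFDeriv ℝ k g x‖ ≤ M)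

/-- T is weakly compact: for every bounded set 𝓑 ⊆ C_c^∞ and f ∈ 𝓑,
lim_{(a,b)→∞} sup_{g ∈ 𝓑} |⟨T f_{(a,b)}, g_{(a,b)}⟩| = 0. -/
def WeaklyCompact {n : ℕ} (T : L2 n →L[ℂ] L2 n) : Prop :=
  ∀ B : Set (Euc n → ℂ), IsBoundedSmoothFamily B → ∀ f ∈ B,
    ∀ ε : ℝ, 0 < ε → ∃ R : ℝ, ∀ p ∈ farFrom (basePt n) R, ∀ g ∈ B,
      ‖pairing (⇑(T (toL2 (dil f p)))) (dil g p)‖ < ε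

/-- The Schur-type bound: sup_{(a',b')} w(a',b')⁻¹ ∫ |⟨Sψ_{(a',b')}, ψ_{(a,b)}⟩| w(a,b) dλ < ∞. -/
def SchurBound {n : ℕ} (ψ : Euc n → ℂ) (S : L2 n →L[ℂ] L2 n) (w : ℝ × Euc n → ℝ) : Prop :=
  ∃ C : ℝ, ∀ p' : ℝ × Euc n, 0 < p'.1 →
    (∫⁻ p, ENNReal.ofReal (‖pairing (⇑(S (toL2 (dil ψ p')))) (dil ψ p)‖ * w p) ∂(lamMeas n))
      ≤ ENNReal.ofReal (C * w p')

/-- The localization decay: lim_{R→∞} sup_{(a',b')} w(a',b')⁻¹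
∫_{D((a',b'),R)^c} |⟨Sψ_{(a',b')}, ψ_{(a,b)}⟩| w(a,b) dλ = 0. -/
def LocDecay {n : ℕ} (ψ : Euc n → ℂ) (S : L2 n →L[ℂ] L2 n) (w : ℝ × Euc n → ℝ) : Prop :=
  ∀ ε : ℝ, 0 < ε → ∃ R : ℝ, ∀ p' : ℝ × Euc n, 0 < p'.1 →
    (∫⁻ p in farFrom p' R,
        ENNReal.ofReal (‖pairing (⇑(S (toL2 (dil ψ p')))) (dil ψ p)‖ * w p) ∂(lamMeas n))
      ≤ ENNReal.ofReal (ε * w p')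

/-- T is localized with respect to {ψ_{(a,b)}} with weight w. -/
def Localized {n : ℕ} (ψ : Euc n → ℂ) (T : L2 n →L[ℂ] L2 n) (w : ℝ × Euc n → ℝ) : Prop :=
  SchurBound ψ T w ∧ SchurBound ψ (ContinuousLinearMap.adjoint T) w ∧
  LocDecay ψ T w ∧ LocDecay ψ (ContinuousLinearMap.adjoint T) w

/-- The piecewise bound function G of Lemma 4.1. -/
def Gfun (n : ℕ) (δ : ℝ) (p : ℝ × Euc n) : ℝ :=
  if 1 ≤ p.1 then
    (if ‖p.2‖ ≤ p.1 then p.1 ^ (-((n : ℝ) / 2 + δ))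
     else p.1 ^ ((n : ℝ) / 2) * ‖p.2‖ ^ (-((n : ℝ) + δ)))
  else
    (if ‖p.2‖ ≤ 1 then p.1 ^ ((n : ℝ) / 2 + δ)
     else p.1 ^ ((n : ℝ) / 2 + δ) * ‖p.2‖ ^ (-((n : ℝ) + δ)))

/-- Calderón–Zygmund kernel with constants C_K and δ. -/
def IsCZKernel (n : ℕ) (K : Euc n → Euc n → ℂ) (CK δ : ℝ) : Prop :=
  (∀ x y : Euc n, x ≠ y → ‖K x y‖ ≤ CK * ‖x - y‖ ^ (-(n : ℝ))) ∧
  (∀ x y y' : Euc n, y ≠ y' → ‖y - y'‖ ≤ ‖x - y‖ / 2 →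
    ‖K x y - K x y'‖ ≤ CK * ‖y - y'‖ ^ δ * ‖x - y‖ ^ (-((n : ℝ) + δ))) ∧
  (∀ x y y' : Euc n, y ≠ y' → ‖y - y'‖ ≤ ‖x - y‖ / 2 →
    ‖K y x - K y' x‖ ≤ CK * ‖y - y'‖ ^ δ * ‖x - y‖ ^ (-((n : ℝ) + δ)))


namespace Stmt0Aux

open MeasureTheory Metric Set Filter ENNReal
open scoped ENNReal Topology ComplexConjugate RealInnerProductSpace

variable {n : ℕ}

/-- The open upper half space. -/
def H (n : ℕ) : Set (ℝ × Euc n) := {p | 0 < p.1}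

lemma measurableSet_H : MeasurableSet (H n) :=
  measurableSet_lt measurable_const measurable_fst

lemma lam_compl_H : lamMeas n ((H n)ᶜ) = 0 := by
  have h1 : (((volume : Measure ℝ).restrict (Set.Ioi (0:ℝ))).prod
      (volume : Measure (Euc n))) ((H n)ᶜ) = 0 := by
    have : ((H n)ᶜ : Set (ℝ × Euc n)) = (Set.Iic (0:ℝ)) ×ˢ (Set.univ : Set (Euc n)) := by
      ext p; simp [H, Set.mem_prod, not_lt]
    rw [this, Measure.prod_prod]
    have : ((volume : Measure ℝ).restrict (Set.Ioi (0:ℝ))) (Set.Iic 0) = 0 := by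
      rw [Measure.restrict_apply measurableSet_Iic, Set.Iic_inter_Ioi, Set.Ioc_self]
      exact measure_empty
    simp [this]
  exact measure_mono_null (fun x hx => hx) <|
    (withDensity_absolutelyContinuous _ _) h1

lemma ae_H : ∀ᵐ p ∂(lamMeas n), p ∈ H n := by
  rw [ae_iff]
  exact measure_mono_null (fun x hx => by simpa using hx) lam_compl_H

lemma lam_restrict_H : (lamMeas n).restrict (H n) = lamMeas n :=
  Measure.restrict_eq_self_of_ae_mem ae_H

end Stmt0Aux
namespace Stmt0Aux
open MeasureTheory Metric Set Filter ENNReal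
open scoped ENNReal Topology ComplexConjugate

variable {n : ℕ}

lemma map_affine (a : ℝ) (ha : 0 < a) (b : Euc n) :
    Measure.map (fun x : Euc n => a⁻¹ • (x - b)) (volume : Measure (Euc n))
      = ENNReal.ofReal (a ^ n) • (volume : Measure (Euc n)) := by
  have h1 : (fun x : Euc n => a⁻¹ • (x - b)) = (fun y : Euc n => a⁻¹ • y) ∘ (fun x => x + (-b)) := by
    ext x; simp [sub_eq_add_neg]
  rw [h1, ← Measure.map_map (by fun_prop) (by fun_prop)]
  rw [map_add_right_eq_self (volume : Measure (Euc n)) (-b)]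
  rw [Measure.map_addHaar_smul (volume : Measure (Euc n)) (inv_ne_zero ha.ne')]
  congr 1
  rw [finrank_euclideanSpace_fin, inv_pow, inv_inv, abs_of_nonneg (pow_nonneg ha.le n)]

lemma eLpNorm_dil {φ : Euc n → ℂ} (hφ : AEStronglyMeasurable φ (volume : Measure (Euc n)))
    {p : ℝ × Euc n} (hp : 0 < p.1) :
    eLpNorm (dil φ p) 2 (volume : Measure (Euc n)) = eLpNorm φ 2 (volume : Measure (Euc n)) := by
  set a := p.1
  set T : Euc n → Euc n := fun x => a⁻¹ • (x - p.2) with hT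
  have hmap : Measure.map T (volume : Measure (Euc n))
      = ENNReal.ofReal (a ^ n) • (volume : Measure (Euc n)) := map_affine a hp p.2
  have hTmeas : Measurable T := by fun_prop
  have hφm : AEStronglyMeasurable φ (Measure.map T (volume : Measure (Euc n))) := by
    rw [hmap]; exact hφ.mono_ac Measure.smul_absolutelyContinuous
  have hdil : dil φ p = (a ^ (-(n:ℝ)/2) : ℝ) • (φ ∘ T) := rfl
  rw [hdil, eLpNorm_const_smul, ← eLpNorm_map_measure hφm hTmeas.aemeasurable, hmap,
    eLpNorm_smul_measure_of_ne_top (by norm_num)]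
  have h2 : ((1 : ℝ≥0∞) / 2).toReal = (2:ℝ)⁻¹ := by simp
  rw [h2]
  have hane : (0:ℝ) < a ^ n := pow_pos hp _
  have h3 : (ENNReal.ofReal (a ^ n)) ^ (2:ℝ)⁻¹ = ENNReal.ofReal ((a ^ n) ^ ((2:ℝ)⁻¹)) := by
    rw [← ENNReal.ofReal_rpow_of_pos hane]
  rw [h3, smul_eq_mul, ← mul_assoc]
  have h4 : (‖(a ^ (-(n:ℝ)/2) : ℝ)‖₊ : ℝ≥0∞) * ENNReal.ofReal ((a ^ n) ^ ((2:ℝ)⁻¹)) = 1 := by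
    have ha1 : (‖(a ^ (-(n:ℝ)/2) : ℝ)‖₊ : ℝ≥0∞) = ENNReal.ofReal (a ^ (-(n:ℝ)/2)) := by
      rw [← enorm_eq_nnnorm, ← ofReal_norm, Real.norm_eq_abs,
        abs_of_nonneg (Real.rpow_nonneg hp.le _)]
    rw [ha1, ← ENNReal.ofReal_mul (Real.rpow_nonneg hp.le _)]
    have : (a ^ n : ℝ) ^ ((2:ℝ)⁻¹) = a ^ ((n:ℝ)/2) := by
      rw [← Real.rpow_natCast a n, ← Real.rpow_mul hp.le]
      norm_num [div_eq_mul_inv]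
    rw [this, ← Real.rpow_add hp, neg_div, neg_add_cancel, Real.rpow_zero,
      ENNReal.ofReal_one]
  rw [← enorm_eq_nnnorm] at h4
  rw [h4, one_mul]

lemma memLp_dil {φ : Euc n → ℂ} (hφ : MemLp φ 2 (volume : Measure (Euc n)))
    {p : ℝ × Euc n} (hp : 0 < p.1) : MemLp (dil φ p) 2 (volume : Measure (Euc n)) := by
  set T : Euc n → Euc n := fun x => p.1⁻¹ • (x - p.2) with hT
  have hmap := map_affine p.1 hp p.2
  have hTmeas : Measurable T := by fun_prop
  have hφm : AEStronglyMeasurable φ (Measure.map T (volume : Measure (Euc n))) := by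
    rw [hmap]; exact hφ.1.mono_ac Measure.smul_absolutelyContinuous
  have h1 : MemLp φ 2 (Measure.map T (volume : Measure (Euc n))) := by
    rw [hmap]; exact hφ.smul_measure ENNReal.ofReal_ne_top
  have h2 : MemLp (φ ∘ T) 2 (volume : Measure (Euc n)) :=
    (memLp_map_measure_iff hφm hTmeas.aemeasurable).mp h1
  exact h2.const_smul ((p.1 ^ (-(n:ℝ)/2) : ℝ))

lemma toL2_coe {u : Euc n → ℂ} (hu : MemLp u 2 (volume : Measure (Euc n))) :
    (toL2 u : Euc n → ℂ) =ᵐ[volume] u := by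
  rw [toL2, dif_pos hu]; exact hu.coeFn_toLp

lemma norm_toL2 {u : Euc n → ℂ} (hu : MemLp u 2 (volume : Measure (Euc n))) :
    ‖toL2 u‖ = (eLpNorm u 2 (volume : Measure (Euc n))).toReal := by
  rw [toL2, dif_pos hu, Lp.norm_toLp]

lemma dist_toL2 {u v : Euc n → ℂ} (hu : MemLp u 2 (volume : Measure (Euc n)))
    (hv : MemLp v 2 (volume : Measure (Euc n))) :
    dist (toL2 u) (toL2 v) = (eLpNorm (u - v) 2 (volume : Measure (Euc n))).toReal := by
  rw [toL2, toL2, dif_pos hu, dif_pos hv, Lp.dist_def]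
  congr 1
  apply eLpNorm_congr_ae
  filter_upwards [hu.coeFn_toLp, hv.coeFn_toLp] with x h1 h2
  simp [h1, h2]

end Stmt0Aux
namespace Stmt0Aux
open MeasureTheory Metric Set Filter ENNReal
open scoped ENNReal Topology ComplexConjugate

variable {n : ℕ}

/-- The coefficient family as a map into `L2 n`. -/
def Psi (ψ : Euc n → ℂ) (p : ℝ × Euc n) : L2 n := toL2 (dil ψ p)

lemma rpow_anti {x y s : ℝ} (hx : 0 < x) (hxy : x ≤ y) (hs : s ≤ 0) : y ^ s ≤ x ^ s := by
  have h1 : x ^ (-s) ≤ y ^ (-s) := Real.rpow_le_rpow hx.le hxy (neg_nonneg.2 hs)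
  have hx' : (0:ℝ) < x ^ (-s) := Real.rpow_pos_of_pos hx _
  calc y ^ s = (y ^ (-s))⁻¹ := by rw [← Real.rpow_neg (hx.trans_le hxy).le, neg_neg]
  _ ≤ (x ^ (-s))⁻¹ := by exact inv_anti₀ hx' h1
  _ = x ^ s := by rw [← Real.rpow_neg hx.le, neg_neg]

lemma coe_nnnorm_sq (z : ℂ) : (‖z‖₊ : ℝ≥0∞) ^ (2:ℝ) = ENNReal.ofReal (‖z‖^2) := by
  rw [← enorm_eq_nnnorm, ← ofReal_norm, ENNReal.ofReal_rpow_of_nonneg (norm_nonneg z) (by norm_num)]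
  congr 1
  rw [show ((2:ℝ)) = ((2:ℕ):ℝ) by norm_num, Real.rpow_natCast]

lemma eLpNorm_two_eq {u : Euc n → ℂ} :
    eLpNorm u 2 (volume : Measure (Euc n))
      = (∫⁻ x, ENNReal.ofReal (‖u x‖^2) ∂(volume : Measure (Euc n))) ^ (1/(2:ℝ)) := by
  rw [eLpNorm_eq_lintegral_rpow_enorm_toReal two_ne_zero ENNReal.ofNat_ne_top]
  simp only [ENNReal.toReal_ofNat, enorm_eq_nnnorm, coe_nnnorm_sq]

lemma continuousOn_Psi_cc {g : Euc n → ℂ} (hgc : Continuous g) (hgs : HasCompactSupport g) :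
    ContinuousOn (Psi g) (H n) := by
  have hgmem : MemLp g 2 (volume : Measure (Euc n)) := hgc.memLp_of_hasCompactSupport hgs
  obtain ⟨x₀, hCg⟩ := hgc.norm.exists_forall_ge_of_hasCompactSupport hgs.norm
  set Cg : ℝ := ‖g x₀‖ with hCgdef
  have hCg0 : 0 ≤ Cg := norm_nonneg _
  obtain ⟨Rg, hRg⟩ := hgs.isBounded.subset_closedBall 0
  intro p₀ hp₀
  have ha₀ : 0 < p₀.1 := hp₀
  set r₀ : ℝ := p₀.1 / 2 with hr₀def
  have hr₀pos : 0 < r₀ := by positivity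
  set Cmax : ℝ := (p₀.1/2) ^ (-(n:ℝ)/2) * Cg with hCmaxdef
  have hCmax0 : 0 ≤ Cmax := mul_nonneg (Real.rpow_nonneg (by positivity) _) hCg0
  set RR : ℝ := ‖p₀.2‖ + r₀ + (p₀.1 + r₀) * max Rg 0 with hRRdef
  -- uniform bound for nearby p
  have hbd : ∀ p : ℝ × Euc n, dist p p₀ < r₀ → ∀ x : Euc n,
      ‖dil g p x‖ ≤ Cmax ∧ (RR < ‖x‖ → dil g p x = 0) := by
    intro p hp x
    have hd1 : dist p.1 p₀.1 < r₀ := lt_of_le_of_lt (by rw [Prod.dist_eq]; exact le_max_left _ _) hp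
    have hd2 : dist p.2 p₀.2 < r₀ := lt_of_le_of_lt (by rw [Prod.dist_eq]; exact le_max_right _ _) hp
    have halow : p₀.1/2 ≤ p.1 := by
      have := abs_lt.1 (by rwa [Real.dist_eq] at hd1)
      linarith [this.1]
    have hahigh : p.1 ≤ p₀.1 + r₀ := by
      have := abs_lt.1 (by rwa [Real.dist_eq] at hd1)
      linarith [this.2]
    have hapos : 0 < p.1 := lt_of_lt_of_le (by positivity) halow
    constructor
    · have h1 : ‖dil g p x‖ = p.1 ^ (-(n:ℝ)/2) * ‖g (p.1⁻¹ • (x - p.2))‖ := by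
        rw [dil, norm_smul, Real.norm_eq_abs, abs_of_nonneg (Real.rpow_nonneg hapos.le _)]
      rw [h1]
      exact mul_le_mul (rpow_anti (by positivity) halow
        (by have : (0:ℝ) ≤ (n:ℝ) := Nat.cast_nonneg n; linarith)) (hCg _)
        (norm_nonneg _) (Real.rpow_nonneg (by positivity) _)
    · intro hx
      rw [dil]
      have : g (p.1⁻¹ • (x - p.2)) = 0 := by
        by_contra hne
        have hmem : p.1⁻¹ • (x - p.2) ∈ tsupport g := subset_tsupport g hne
        have h2 : ‖p.1⁻¹ • (x - p.2)‖ ≤ Rg := by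
          simpa [mem_closedBall, dist_zero_right] using hRg hmem
        have h3 : ‖x - p.2‖ ≤ p.1 * max Rg 0 := by
          have h4 : ‖p.1⁻¹ • (x - p.2)‖ = p.1⁻¹ * ‖x - p.2‖ := by
            rw [norm_smul, Real.norm_eq_abs, abs_of_nonneg (by positivity)]
          have h5 : ‖p.1⁻¹ • (x - p.2)‖ ≤ max Rg 0 := le_trans h2 (le_max_left _ _)
          rw [h4] at h5
          calc ‖x - p.2‖ = p.1 * (p.1⁻¹ * ‖x - p.2‖) := by field_simp
          _ ≤ p.1 * max Rg 0 := by
            exact mul_le_mul_of_nonneg_left h5 hapos.le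
        have h6 : ‖x‖ ≤ ‖p.2‖ + ‖x - p.2‖ := by
          have : x = p.2 + (x - p.2) := by abel
          calc ‖x‖ = ‖p.2 + (x - p.2)‖ := by rw [← this]
          _ ≤ ‖p.2‖ + ‖x - p.2‖ := norm_add_le _ _
        have h7 : ‖p.2‖ ≤ ‖p₀.2‖ + r₀ := by
          have := norm_sub_norm_le p.2 p₀.2
          have hd2' : ‖p.2 - p₀.2‖ < r₀ := by rwa [dist_eq_norm] at hd2
          linarith
        have h8 : p.1 * max Rg 0 ≤ (p₀.1 + r₀) * max Rg 0 :=
          mul_le_mul_of_nonneg_right hahigh (le_max_right _ _)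
        have : ‖x‖ ≤ RR := by rw [hRRdef]; linarith
        linarith
      rw [this, smul_zero]
  -- dominated convergence
  set F : (ℝ × Euc n) → Euc n → ℝ≥0∞ :=
    fun p x => ENNReal.ofReal (‖dil g p x - dil g p₀ x‖^2) with hFdef
  have hp₀ball : dist p₀ p₀ < r₀ := by simpa [dist_self] using hr₀pos
  have hcont_dil : ∀ p : ℝ × Euc n, Continuous (dil g p) := by
    intro p
    unfold dil
    fun_prop
  have key : Tendsto (fun p => ∫⁻ x, F p x ∂(volume : Measure (Euc n))) (𝓝[H n] p₀)
      (𝓝 (∫⁻ (_ : Euc n), (0:ℝ≥0∞) ∂(volume : Measure (Euc n)))) := by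
    apply tendsto_lintegral_filter_of_dominated_convergence
      ((closedBall (0:Euc n) RR).indicator
        (fun _ => ENNReal.ofReal ((2*Cmax)^2)))
    · filter_upwards with p
      exact (ENNReal.continuous_ofReal.comp
        (((hcont_dil p).sub (hcont_dil p₀)).norm.pow 2)).measurable
    · have hball : Metric.ball p₀ r₀ ∈ 𝓝[H n] p₀ :=
        mem_nhdsWithin_of_mem_nhds (Metric.ball_mem_nhds _ hr₀pos)
      filter_upwards [hball] with p hp
      apply Filter.Eventually.of_forall
      intro x
      by_cases hx : x ∈ closedBall (0:Euc n) RR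
      · rw [Set.indicator_of_mem hx]
        apply ENNReal.ofReal_le_ofReal
        have h1 := (hbd p (by rwa [mem_ball] at hp) x).1
        have h2 := (hbd p₀ hp₀ball x).1
        have h3 : ‖dil g p x - dil g p₀ x‖ ≤ 2*Cmax := by
          calc ‖dil g p x - dil g p₀ x‖ ≤ ‖dil g p x‖ + ‖dil g p₀ x‖ := norm_sub_le _ _
          _ ≤ 2*Cmax := by linarith
        exact pow_le_pow_left₀ (norm_nonneg _) h3 2
      · rw [Set.indicator_of_notMem hx]
        have hxout : RR < ‖x‖ := by
          simpa [mem_closedBall, dist_zero_right, not_le] using hx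
        have hz1 := (hbd p (by rwa [mem_ball] at hp) x).2 hxout
        have hz2 := (hbd p₀ hp₀ball x).2 hxout
        simp only [hFdef, hz1, hz2, sub_zero, norm_zero]
        simp
    · rw [lintegral_indicator measurableSet_closedBall, setLIntegral_const]
      exact ENNReal.mul_ne_top ENNReal.ofReal_ne_top
        (measure_closedBall_lt_top).ne
    · apply Filter.Eventually.of_forall
      intro x
      have h1 : Tendsto (fun p : ℝ × Euc n => dil g p x) (𝓝 p₀) (𝓝 (dil g p₀ x)) := by
        have c1 : ContinuousAt (fun p : ℝ × Euc n => (p.1 ^ (-(n:ℝ)/2) : ℝ)) p₀ := by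
          exact (Real.continuousAt_rpow_const p₀.1 _ (Or.inl ha₀.ne')).comp
            continuous_fst.continuousAt
        have c2 : ContinuousAt (fun p : ℝ × Euc n => g (p.1⁻¹ • (x - p.2))) p₀ := by
          apply hgc.continuousAt.comp
          exact ((continuousAt_inv₀ ha₀.ne').comp continuous_fst.continuousAt).smul
            ((continuous_const.sub continuous_snd).continuousAt)
        exact c1.smul c2
      have h2 : Tendsto (fun p : ℝ × Euc n => dil g p x) (𝓝[H n] p₀) (𝓝 (dil g p₀ x)) :=
        h1.mono_left nhdsWithin_le_nhds
      have h3 : Tendsto (fun p : ℝ × Euc n => dil g p x - dil g p₀ x) (𝓝[H n] p₀) (𝓝 0) := by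
        simpa only [sub_self] using h2.sub_const (dil g p₀ x)
      have h4 : Tendsto (fun p : ℝ × Euc n => ‖dil g p x - dil g p₀ x‖^2) (𝓝[H n] p₀)
          (𝓝 0) := by
        simpa only [norm_zero, ne_eq, OfNat.ofNat_ne_zero, not_false_eq_true, zero_pow]
          using (h3.norm).pow 2
      have h6 := (ENNReal.continuous_ofReal.tendsto 0).comp h4
      simpa only [Function.comp_def, ENNReal.ofReal_zero] using h6
  rw [lintegral_zero] at key
  -- conclude
  have hdist : ∀ p ∈ H n, dist (Psi g p) (Psi g p₀)
      = ((∫⁻ x, F p x ∂(volume : Measure (Euc n))) ^ (1/(2:ℝ))).toReal := by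
    intro p hp
    rw [Psi, Psi, dist_toL2 (memLp_dil hgmem hp) (memLp_dil hgmem hp₀), eLpNorm_two_eq]
    rfl
  have hgoal : Tendsto (fun p => dist (Psi g p) (Psi g p₀)) (𝓝[H n] p₀) (𝓝 0) := by
    have h5 : Tendsto (fun p => ((∫⁻ x, F p x ∂(volume : Measure (Euc n))) ^ (1/(2:ℝ))).toReal)
        (𝓝[H n] p₀) (𝓝 0) := by
      have h6 : Tendsto (fun y : ℝ≥0∞ => (y ^ (1/(2:ℝ))).toReal) (𝓝 0) (𝓝 0) := by
        have h7 : Tendsto (fun y : ℝ≥0∞ => y.toReal ^ (1/(2:ℝ))) (𝓝 0) (𝓝 0) := by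
          have h8 : Tendsto (fun y : ℝ≥0∞ => y.toReal) (𝓝 0) (𝓝 (0:ℝ)) := by
            simpa using (ENNReal.tendsto_toReal (a := 0) (by simp))
          have h9 : ContinuousAt (fun t : ℝ => t ^ (1/(2:ℝ))) 0 :=
            Real.continuousAt_rpow_const 0 _ (Or.inr (by norm_num))
          have := h9.tendsto.comp h8
          simpa [Function.comp_def, Real.zero_rpow (by norm_num : (1/(2:ℝ)) ≠ 0)] using this
        apply h7.congr
        intro y
        rw [ENNReal.toReal_rpow]
      exact h6.comp key
    apply h5.congr'
    filter_upwards [self_mem_nhdsWithin] with p hp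
    exact (hdist p hp).symm
  exact tendsto_iff_dist_tendsto_zero.2 hgoal

end Stmt0Aux
namespace Stmt0Aux
open MeasureTheory Metric Set Filter ENNReal
open scoped ENNReal Topology ComplexConjugate

variable {n : ℕ}

lemma dil_sub (u v : Euc n → ℂ) (p : ℝ × Euc n) : dil u p - dil v p = dil (u - v) p := by
  funext x
  simp [dil, smul_sub]

lemma continuousOn_Psi {ψ : Euc n → ℂ} (hψ : MemLp ψ 2 (volume : Measure (Euc n))) :
    ContinuousOn (Psi ψ) (H n) := by
  intro p₀ hp₀
  rw [ContinuousWithinAt, Metric.tendsto_nhdsWithin_nhds]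
  intro ε hε
  obtain ⟨g, hgs, hsub, hgc, hgmem⟩ := hψ.exists_hasCompactSupport_eLpNorm_sub_le
    (by norm_num : (2:ℝ≥0∞) ≠ ∞) (ε := ENNReal.ofReal (ε/4))
    (ENNReal.ofReal_pos.2 (by linarith)).ne'
  have hclose : ∀ p ∈ H n, dist (Psi ψ p) (Psi g p) ≤ ε/4 := by
    intro p hp
    rw [Psi, Psi, dist_toL2 (memLp_dil hψ hp) (memLp_dil hgmem hp), dil_sub,
      eLpNorm_dil (hψ.1.sub hgmem.1) hp]
    exact ENNReal.toReal_le_of_le_ofReal (by linarith) hsub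
  have hcc := continuousOn_Psi_cc hgc hgs p₀ hp₀
  rw [ContinuousWithinAt, Metric.tendsto_nhdsWithin_nhds] at hcc
  obtain ⟨δ, hδpos, hδ⟩ := hcc (ε/4) (by linarith)
  refine ⟨δ, hδpos, fun {p} hpH hpd => ?_⟩
  have h1 := hclose p hpH
  have h2 := hδ hpH hpd
  have h3 := hclose p₀ hp₀
  calc dist (Psi ψ p) (Psi ψ p₀)
      ≤ dist (Psi ψ p) (Psi g p) + dist (Psi g p) (Psi g p₀) + dist (Psi g p₀) (Psi ψ p₀) :=
        dist_triangle4 _ _ _ _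
  _ < ε := by rw [dist_comm (Psi g p₀)] at *; linarith

lemma measurable_arcosh : Measurable arcosh := by
  unfold arcosh
  exact Real.measurable_log.comp (measurable_id.add
    (Real.continuous_sqrt.measurable.comp ((measurable_id.pow_const 2).sub measurable_const)))

lemma measurable_hypDist (q : ℝ × Euc n) : Measurable (fun p => hypDist q p) := by
  apply measurable_arcosh.comp
  apply Measurable.add measurable_const
  apply Measurable.div
  · apply Measurable.add
    · exact ((measurable_const.sub measurable_fst).abs).pow_const 2
    · exact ((Measurable.sub measurable_const measurable_snd).norm).pow_const 2
  · exact (measurable_const.mul measurable_const).mul measurable_fst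

lemma measurableSet_farFrom (q : ℝ × Euc n) (R : ℝ) : MeasurableSet (farFrom q R) := by
  have : farFrom q R = {p : ℝ × Euc n | 0 < p.1} ∩ {p | R ≤ hypDist q p} := by
    ext p; simp [farFrom, Set.mem_inter_iff, Set.mem_setOf_eq]
  rw [this]
  exact (measurableSet_lt measurable_const measurable_fst).inter
    (measurableSet_le measurable_const (measurable_hypDist q))

lemma measurableSet_near (R : ℝ) :
    MeasurableSet {p : ℝ × Euc n | 0 < p.1 ∧ hypDist (basePt n) p < R} := by
  have : {p : ℝ × Euc n | 0 < p.1 ∧ hypDist (basePt n) p < R}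
      = {p : ℝ × Euc n | 0 < p.1} ∩ {p | hypDist (basePt n) p < R} := by
    ext p; simp [Set.mem_inter_iff, Set.mem_setOf_eq]
  rw [this]
  exact (measurableSet_lt measurable_const measurable_fst).inter
    (measurableSet_lt (measurable_hypDist _) measurable_const)

end Stmt0Aux
namespace Stmt0Aux
open MeasureTheory Metric Set Filter ENNReal
open scoped ENNReal Topology ComplexConjugate

variable {n : ℕ}

local notation "⟪" x ", " y "⟫" => @inner ℂ _ _ x y

lemma pairing_eq {ψ : Euc n → ℂ} (hψ : MemLp ψ 2 (volume : Measure (Euc n))) (f : L2 n)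
    {p : ℝ × Euc n} (hp : 0 < p.1) :
    pairing (⇑f) (dil ψ p) = ⟪Psi ψ p, f⟫ := by
  have hcoe := toL2_coe (memLp_dil hψ hp)
  rw [pairing]
  have h1 : ∫ x, f x * conj (dil ψ p x) ∂(volume : Measure (Euc n))
      = ∫ x, f x * conj ((Psi ψ p : Euc n → ℂ) x) ∂(volume : Measure (Euc n)) := by
    apply integral_congr_ae
    filter_upwards [hcoe] with x hx
    rw [Psi, hx]
  rw [h1, MeasureTheory.L2.inner_def]
  apply integral_congr_ae
  filter_upwards with x
  rw [RCLike.inner_apply, mul_comm]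

lemma frameW {ψ : Euc n → ℂ} (hψ : MemLp ψ 2 (volume : Measure (Euc n)))
    (hframe : IsParsevalFrame ψ) (f : L2 n) :
    ‖f‖ ^ 2 = ∫ p, ‖⟪Psi ψ p, f⟫‖ ^ 2 ∂(lamMeas n) := by
  rw [hframe f]
  apply integral_congr_ae
  filter_upwards [ae_H] with p hp
  rw [pairing_eq hψ f hp]

lemma continuousOn_W {ψ : Euc n → ℂ} (hψ : MemLp ψ 2 (volume : Measure (Euc n))) (f : L2 n) :
    ContinuousOn (fun p => ⟪Psi ψ p, f⟫) (H n) :=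
  (continuousOn_Psi hψ).inner continuousOn_const

lemma aesm_W {ψ : Euc n → ℂ} (hψ : MemLp ψ 2 (volume : Measure (Euc n))) (f : L2 n) :
    AEStronglyMeasurable (fun p => ⟪Psi ψ p, f⟫) (lamMeas n) := by
  have h1 : AEStronglyMeasurable (fun p => ⟪Psi ψ p, f⟫) ((lamMeas n).restrict (H n)) :=
    (continuousOn_W hψ f).aestronglyMeasurable measurableSet_H
  rwa [lam_restrict_H] at h1

lemma integrable_W_sq {ψ : Euc n → ℂ} (hψ : MemLp ψ 2 (volume : Measure (Euc n)))
    (hframe : IsParsevalFrame ψ) (f : L2 n) :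
    Integrable (fun p => ‖⟪Psi ψ p, f⟫‖ ^ 2) (lamMeas n) := by
  by_cases hf : f = 0
  · subst hf
    simp only [inner_zero_right, norm_zero]
    simp [integrable_zero]
  · by_contra h
    have h0 := frameW hψ hframe f
    rw [integral_undef h] at h0
    exact hf (norm_eq_zero.1 ((pow_eq_zero_iff two_ne_zero).1 h0))

lemma tail_congr {ψ : Euc n → ℂ} (hψ : MemLp ψ 2 (volume : Measure (Euc n))) (f : L2 n) (R : ℝ) :
    ∫ p in farFrom (basePt n) R, ‖pairing (⇑f) (dil ψ p)‖ ^ 2 ∂(lamMeas n)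
      = ∫ p in farFrom (basePt n) R, ‖⟪Psi ψ p, f⟫‖ ^ 2 ∂(lamMeas n) := by
  apply setIntegral_congr_fun (measurableSet_farFrom _ _)
  intro p hp
  dsimp only
  rw [pairing_eq hψ f hp.1]

lemma near_subset (R : ℝ) :
    {p : ℝ × Euc n | 0 < p.1 ∧ hypDist (basePt n) p < R} ⊆
      (Set.Icc ((2*(1+Real.exp R))⁻¹) (2*(1+Real.exp R)))
        ×ˢ (closedBall (0:Euc n) (2*(1+Real.exp R))) := by
  rintro p ⟨hp1, hp2⟩
  set Y := Real.exp R with hY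
  have hY0 : 0 < Y := Real.exp_pos R
  have hhd : hypDist (basePt n) p
      = arcosh (1 + (|1 - p.1| ^ 2 + ‖p.2‖ ^ 2) / (2 * p.1)) := by
    rw [hypDist, basePt]
    norm_num
  set q : ℝ := 1 + (|1 - p.1| ^ 2 + ‖p.2‖ ^ 2) / (2 * p.1) with hq
  have hq1 : 1 ≤ q := by
    rw [hq]
    have : 0 ≤ (|1 - p.1| ^ 2 + ‖p.2‖ ^ 2) / (2 * p.1) :=
      div_nonneg (by positivity) (by linarith)
    linarith
  have harc : Real.log q ≤ hypDist (basePt n) p := by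
    rw [hhd, arcosh]
    exact Real.log_le_log (by linarith) (le_add_of_nonneg_right (Real.sqrt_nonneg _))
  have hqY : q < Y := by
    rw [hY]
    exact (Real.log_lt_iff_lt_exp (by linarith)).1 (lt_of_le_of_lt harc hp2)
  have hnum : |1 - p.1| ^ 2 + ‖p.2‖ ^ 2 < 2 * p.1 * Y := by
    have h1 : (|1 - p.1| ^ 2 + ‖p.2‖ ^ 2) / (2 * p.1) < Y - 1 := by
      rw [hq] at hqY; linarith
    have h2 := (div_lt_iff₀ (by linarith : (0:ℝ) < 2 * p.1)).1 h1
    nlinarith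
  have habs : |1 - p.1| ^ 2 = (1 - p.1)^2 := sq_abs _
  rw [habs] at hnum
  have hY1 : 1 < Y := lt_of_le_of_lt hq1 hqY
  have hupper : p.1 ≤ 2*(1+Y) := by nlinarith [norm_nonneg p.2, sq_nonneg (‖p.2‖)]
  have hlower : (2*(1+Y))⁻¹ ≤ p.1 := by
    rw [← one_div]
    rw [div_le_iff₀ (by linarith : (0:ℝ) < 2*(1+Y))]
    nlinarith [sq_nonneg (‖p.2‖)]
  have hnorm : ‖p.2‖ ≤ 2*(1+Y) := by
    nlinarith [norm_nonneg p.2, sq_nonneg (‖p.2‖ - 2*(1+Y))]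
  refine ⟨⟨hlower, hupper⟩, ?_⟩
  rwa [mem_closedBall, dist_zero_right]

lemma lam_box_lt_top {c C C' : ℝ} (hc : 0 < c) :
    lamMeas n ((Set.Icc c C) ×ˢ closedBall (0:Euc n) C') < ∞ := by
  rw [lamMeas, withDensity_apply _ (measurableSet_Icc.prod measurableSet_closedBall)]
  set pm := (((volume : Measure ℝ).restrict (Set.Ioi (0:ℝ))).prod (volume : Measure (Euc n)))
  have h1 : ∫⁻ p in (Set.Icc c C) ×ˢ closedBall (0:Euc n) C',
      ENNReal.ofReal (p.1 ^ (-((n : ℝ) + 1))) ∂pm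
      ≤ ∫⁻ _ in (Set.Icc c C) ×ˢ closedBall (0:Euc n) C',
        ENNReal.ofReal (c ^ (-((n : ℝ) + 1))) ∂pm := by
    apply setLIntegral_mono' (measurableSet_Icc.prod measurableSet_closedBall)
    intro p hp
    apply ENNReal.ofReal_le_ofReal
    apply rpow_anti hc hp.1.1
    have : (0:ℝ) ≤ (n:ℝ) := Nat.cast_nonneg n
    linarith
  apply lt_of_le_of_lt h1
  rw [setLIntegral_const]
  apply ENNReal.mul_lt_top ENNReal.ofReal_lt_top
  rw [Measure.prod_prod]
  apply ENNReal.mul_lt_top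
  · exact lt_of_le_of_lt (Measure.restrict_le_self _) measure_Icc_lt_top
  · exact measure_closedBall_lt_top

local notation "Wn" => fun (ψ : Euc n → ℂ) (f : L2 n) (p : ℝ × Euc n) => ⟪Psi ψ p, f⟫

lemma tendsto_tail {ψ : Euc n → ℂ} (hψ : MemLp ψ 2 (volume : Measure (Euc n)))
    (hframe : IsParsevalFrame ψ) (f : L2 n) :
    Tendsto (fun m : ℕ => ∫ p in farFrom (basePt n) (m:ℝ), ‖⟪Psi ψ p, f⟫‖ ^ 2 ∂(lamMeas n))
      atTop (𝓝 0) := by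
  have hInt := integrable_W_sq hψ hframe f
  have key : Tendsto (fun m : ℕ => ∫ p,
      (farFrom (basePt n) (m:ℝ)).indicator (fun p => ‖⟪Psi ψ p, f⟫‖ ^ 2) p ∂(lamMeas n))
      atTop (𝓝 (∫ _, (0:ℝ) ∂(lamMeas n))) := by
    apply tendsto_integral_of_dominated_convergence (fun p => ‖⟪Psi ψ p, f⟫‖ ^ 2)
    · intro m
      exact hInt.1.indicator (measurableSet_farFrom _ _)
    · exact hInt
    · intro m
      apply Filter.Eventually.of_forall
      intro p
      rw [Real.norm_eq_abs, abs_of_nonneg]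
      · exact Set.indicator_le_self' (fun q _ => by positivity) p
      · exact Set.indicator_nonneg (fun q _ => by positivity) p
    · apply Filter.Eventually.of_forall
      intro p
      apply tendsto_atTop_of_eventually_const (i₀ := ⌈hypDist (basePt n) p⌉₊ + 1)
      intro m hm
      apply Set.indicator_of_notMem
      rintro ⟨-, hle⟩
      have h1 : hypDist (basePt n) p < ((⌈hypDist (basePt n) p⌉₊ + 1 : ℕ) : ℝ) := by
        push_cast
        exact lt_of_le_of_lt (Nat.le_ceil _) (by linarith)
      have h2 : ((⌈hypDist (basePt n) p⌉₊ + 1 : ℕ) : ℝ) ≤ (m:ℝ) := by exact_mod_cast hm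
      linarith
  rw [integral_zero] at key
  apply key.congr
  intro m
  rw [integral_indicator (measurableSet_farFrom _ _)]

end Stmt0Aux
namespace Stmt0Aux
open MeasureTheory Metric Set Filter ENNReal
open scoped ENNReal Topology ComplexConjugate

variable {n : ℕ}

local notation "⟪" x ", " y "⟫" => @inner ℂ _ _ x y

lemma sq_norm_sub_le (x y : ℂ) : ‖x - y‖^2 ≤ 2*‖x‖^2 + 2*‖y‖^2 := by
  nlinarith [norm_sub_le x y, norm_nonneg x, norm_nonneg y, sq_nonneg (‖x‖ - ‖y‖),
    norm_nonneg (x - y)]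

/-- Splitting the frame identity into near and far parts. -/
lemma split_integral {ψ : Euc n → ℂ} (hψ : MemLp ψ 2 (volume : Measure (Euc n)))
    (hframe : IsParsevalFrame ψ) (f : L2 n) (R : ℝ) :
    ‖f‖^2 = (∫ p in {p : ℝ × Euc n | 0 < p.1 ∧ hypDist (basePt n) p < R},
        ‖⟪Psi ψ p, f⟫‖^2 ∂(lamMeas n))
      + ∫ p in farFrom (basePt n) R, ‖⟪Psi ψ p, f⟫‖^2 ∂(lamMeas n) := by
  have hInt := integrable_W_sq hψ hframe f
  have hHeq : (H n : Set (ℝ × Euc n))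
      = {p | 0 < p.1 ∧ hypDist (basePt n) p < R} ∪ farFrom (basePt n) R := by
    ext p
    constructor
    · intro hp
      rcases lt_or_ge (hypDist (basePt n) p) R with h | h
      · exact Or.inl ⟨hp, h⟩
      · exact Or.inr ⟨hp, h⟩
    · rintro (⟨h, -⟩ | ⟨h, -⟩) <;> exact h
  have hdisj : Disjoint {p : ℝ × Euc n | 0 < p.1 ∧ hypDist (basePt n) p < R}
      (farFrom (basePt n) R) := by
    rw [Set.disjoint_left]
    rintro p ⟨-, h1⟩ ⟨-, h2⟩
    linarith
  have h1 : ∫ p, ‖⟪Psi ψ p, f⟫‖^2 ∂(lamMeas n)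
      = ∫ p in H n, ‖⟪Psi ψ p, f⟫‖^2 ∂(lamMeas n) := by
    rw [lam_restrict_H]
  rw [frameW hψ hframe f, h1, hHeq,
    setIntegral_union hdisj (measurableSet_farFrom _ _) hInt.integrableOn hInt.integrableOn]

set_option maxHeartbeats 400000 in
lemma far_sub_bound {ψ : Euc n → ℂ} (hψ : MemLp ψ 2 (volume : Measure (Euc n)))
    (hframe : IsParsevalFrame ψ) (f g : L2 n) {S : Set (ℝ × Euc n)} (hS : MeasurableSet S) :
    (∫ p in S, ‖⟪Psi ψ p, f - g⟫‖^2 ∂(lamMeas n))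
      ≤ 2*(∫ p in S, ‖⟪Psi ψ p, f⟫‖^2 ∂(lamMeas n))
        + 2*(∫ p in S, ‖⟪Psi ψ p, g⟫‖^2 ∂(lamMeas n)) := by
  have hIf := (integrable_W_sq hψ hframe f).integrableOn (s := S)
  have hIg := (integrable_W_sq hψ hframe g).integrableOn (s := S)
  have hIfg := (integrable_W_sq hψ hframe (f - g)).integrableOn (s := S)
  have hpt : ∀ p ∈ S, ‖⟪Psi ψ p, f - g⟫‖^2
      ≤ 2*‖⟪Psi ψ p, f⟫‖^2 + 2*‖⟪Psi ψ p, g⟫‖^2 := by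
    intro p _
    rw [inner_sub_right]
    exact sq_norm_sub_le _ _
  have step1 := setIntegral_mono_on (μ := lamMeas n) hIfg
    ((hIf.const_mul 2).add (hIg.const_mul 2)) hS hpt
  have step2 : ∫ p in S, (2*‖⟪Psi ψ p, f⟫‖^2 + 2*‖⟪Psi ψ p, g⟫‖^2) ∂(lamMeas n)
      = 2*(∫ p in S, ‖⟪Psi ψ p, f⟫‖^2 ∂(lamMeas n))
        + 2*(∫ p in S, ‖⟪Psi ψ p, g⟫‖^2 ∂(lamMeas n)) := by
    rw [integral_add (hIf.const_mul 2) (hIg.const_mul 2)]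
    simp_rw [← smul_eq_mul, integral_smul]
  exact step1.trans (le_of_eq step2)

end Stmt0Aux
open Filter in
set_option maxHeartbeats 2000000 in
/-- Riesz–Kolmogorov, Theorem 3.2: for a Parseval wavelet frame, a bounded
set K ⊆ L²(ℝⁿ) is totally bounded iff
lim_{R→∞} sup_{f∈K} ∫_{D((1,0),R)^c} |⟨f, ψ_{(a,b)}⟩|² dλ(a,b) = 0. -/
theorem statement0 (n : ℕ) (hn : 1 ≤ n) (ψ : Euc n → ℂ)
    (hψ : MemLp ψ 2 (volume : Measure (Euc n))) (hframe : IsParsevalFrame ψ)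
    (K : Set (L2 n)) (hK : Bornology.IsBounded K) :
    TotallyBounded K ↔
      ∀ ε : ℝ, 0 < ε → ∃ R : ℝ, ∀ f ∈ K,
        (∫ p in farFrom (basePt n) R, ‖pairing (⇑f) (dil ψ p)‖ ^ 2 ∂(lamMeas n)) < ε := by
  constructor
  · -- totally bounded → uniform tail decay
    intro hTB ε hε
    have hεs : 0 < Real.sqrt (ε/8) := Real.sqrt_pos.2 (by linarith)
    obtain ⟨t, htfin, htsub⟩ := (Metric.totallyBounded_iff).1 hTB _ hεs
    have hex : ∀ h : L2 n, ∃ m : ℕ,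
        (∫ p in farFrom (basePt n) ((m:ℕ):ℝ),
          ‖(inner ℂ (Stmt0Aux.Psi ψ p) h : ℂ)‖ ^ 2 ∂(lamMeas n)) < ε/8 := fun h =>
      ((tendsto_order.1 (Stmt0Aux.tendsto_tail hψ hframe h)).2 (ε/8) (by linarith)).exists
    choose mfun hmfun using hex
    obtain ⟨R, hRmax⟩ := (htfin.image (fun h => ((mfun h : ℕ) : ℝ))).bddAbove
    refine ⟨R, fun f hf => ?_⟩
    rw [Stmt0Aux.tail_congr hψ f R]
    obtain ⟨h, hht, hfh⟩ := Set.mem_iUnion₂.1 (htsub hf)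
    rw [Metric.mem_ball] at hfh
    have hb1 := Stmt0Aux.far_sub_bound hψ hframe h (h - f)
      (Stmt0Aux.measurableSet_farFrom (basePt n) R)
    have hsimp : h - (h - f) = f := by abel
    rw [hsimp] at hb1
    have hmono : (∫ p in farFrom (basePt n) R,
          ‖(inner ℂ (Stmt0Aux.Psi ψ p) h : ℂ)‖^2 ∂(lamMeas n))
        ≤ ∫ p in farFrom (basePt n) ((mfun h : ℕ):ℝ),
          ‖(inner ℂ (Stmt0Aux.Psi ψ p) h : ℂ)‖^2 ∂(lamMeas n) := by
      apply setIntegral_mono_set ((Stmt0Aux.integrable_W_sq hψ hframe h).integrableOn)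
      · exact Filter.Eventually.of_forall (fun p => by positivity)
      · apply HasSubset.Subset.eventuallyLE
        intro p hp
        exact ⟨hp.1, le_trans (hRmax (Set.mem_image_of_mem _ hht)) hp.2⟩
    have htot : (∫ p in farFrom (basePt n) R,
          ‖(inner ℂ (Stmt0Aux.Psi ψ p) (h - f) : ℂ)‖^2 ∂(lamMeas n)) ≤ ‖h - f‖^2 := by
      rw [Stmt0Aux.frameW hψ hframe (h - f)]
      exact setIntegral_le_integral (Stmt0Aux.integrable_W_sq hψ hframe (h-f))
        (Filter.Eventually.of_forall (fun p => by positivity))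
    have hhf2 : ‖h - f‖^2 < ε/8 := by
      have hd : ‖h - f‖ = dist f h := by rw [dist_eq_norm, norm_sub_rev]
      have hs := Real.sq_sqrt (show (0:ℝ) ≤ ε/8 by linarith)
      rw [hd]
      nlinarith [dist_nonneg (x := f) (y := h), hfh]
    linarith [hmfun h]
  · -- uniform tail decay → totally bounded
    intro hcond
    rw [Metric.totallyBounded_iff]
    intro ε hε
    obtain ⟨C, hC⟩ := isBounded_iff_forall_norm_le.1 hK
    set M : ℝ := max C 1 with hMdef
    have hM1 : (1:ℝ) ≤ M := le_max_right _ _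
    have hM0 : (0:ℝ) < M := by linarith
    have hMK : ∀ f ∈ K, ‖f‖ ≤ M := fun f hf => le_trans (hC f hf) (le_max_left _ _)
    obtain ⟨R, hR⟩ := hcond (ε^2/64) (by positivity)
    have hRW : ∀ f ∈ K, (∫ p in farFrom (basePt n) R,
        ‖(inner ℂ (Stmt0Aux.Psi ψ p) f : ℂ)‖^2 ∂(lamMeas n)) < ε^2/64 := by
      intro f hf
      rw [← Stmt0Aux.tail_congr hψ f R]
      exact hR f hf
    set Y : ℝ := Real.exp R with hYdef
    have hY0 : 0 < Y := Real.exp_pos R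
    set C0 : ℝ := 2*(1+Y) with hC0def
    have hC00 : 0 < C0 := by positivity
    set E : Set (ℝ × Euc n) := (Set.Icc (C0⁻¹) C0) ×ˢ Metric.closedBall (0:Euc n) C0
      with hEdef
    set nearS : Set (ℝ × Euc n) := {p | 0 < p.1 ∧ hypDist (basePt n) p < R} with hnearSdef
    have hnearE : nearS ⊆ E := Stmt0Aux.near_subset R
    have hEcompact : IsCompact E := isCompact_Icc.prod (isCompact_closedBall _ _)
    have hEH : E ⊆ Stmt0Aux.H n := fun p hp => lt_of_lt_of_le (inv_pos.2 hC00) hp.1.1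
    have hμE : lamMeas n E < ⊤ := Stmt0Aux.lam_box_lt_top (inv_pos.2 hC00)
    have hμnear : lamMeas n nearS < ⊤ := lt_of_le_of_lt (measure_mono hnearE) hμE
    set ν : ℝ := (lamMeas n E).toReal with hνdef
    have hν0 : 0 ≤ ν := ENNReal.toReal_nonneg
    set s : ℝ := Real.sqrt ν with hsdef
    have hs0 : 0 ≤ s := Real.sqrt_nonneg _
    have hs2 : s^2 = ν := Real.sq_sqrt hν0
    set δ₁ : ℝ := ε/(4*(s+1)) with hδ₁def
    set δ₀ : ℝ := ε/(16*M*(s+1)) with hδ₀def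
    have hδ₁0 : 0 < δ₁ := by rw [hδ₁def]; positivity
    have hδ₀0 : 0 < δ₀ := by rw [hδ₀def]; positivity
    have hUC := hEcompact.uniformContinuousOn_of_continuous
      ((Stmt0Aux.continuousOn_Psi hψ).mono hEH)
    rw [Metric.uniformContinuousOn_iff] at hUC
    obtain ⟨δ', hδ'0, hδ'⟩ := hUC δ₀ hδ₀0
    obtain ⟨t0, ht0E, ht0fin, ht0cov⟩ := hEcompact.finite_cover_balls hδ'0
    haveI : Fintype ↥t0 := ht0fin.fintype
    obtain ⟨CΨ, hCΨ⟩ := hEcompact.exists_bound_of_continuousOn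
      ((Stmt0Aux.continuousOn_Psi hψ).mono hEH)
    set CM : ℝ := max CΨ 0 * M with hCMdef
    set Φ : L2 n → (↥t0 → ℂ) := fun f j => (inner ℂ (Stmt0Aux.Psi ψ (j:ℝ × Euc n)) f : ℂ)
      with hΦdef
    have hVsub : Φ '' K ⊆ Set.pi Set.univ (fun _ : ↥t0 => Metric.closedBall (0:ℂ) CM) := by
      rintro v ⟨f, hfK, rfl⟩
      intro j _
      rw [mem_closedBall_zero_iff]
      calc ‖Φ f j‖ ≤ ‖Stmt0Aux.Psi ψ (j:ℝ×Euc n)‖ * ‖f‖ := norm_inner_le_norm _ _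
      _ ≤ max CΨ 0 * M := mul_le_mul (le_trans (hCΨ _ (ht0E j.2)) (le_max_left _ _))
          (hMK f hfK) (norm_nonneg _) (le_max_right _ _)
    have hVtb : TotallyBounded (Φ '' K) := TotallyBounded.subset hVsub
      ((isCompact_univ_pi (fun _ => isCompact_closedBall _ _)).totallyBounded)
    obtain ⟨t', ht'sub, ht'fin, ht'cov⟩ := totallyBounded_iff_subset.1 hVtb _
      (Metric.dist_mem_uniformity hδ₁0)
    have hselE : ∀ v : ↥t0 → ℂ, ∃ fv : L2 n, v ∈ t' → (fv ∈ K ∧ Φ fv = v) := by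
      intro v
      by_cases hv : v ∈ t'
      · obtain ⟨fv, hfvK, hfvΦ⟩ := ht'sub hv
        exact ⟨fv, fun _ => ⟨hfvK, hfvΦ⟩⟩
      · exact ⟨0, fun hvv => absurd hvv hv⟩
    choose sel hsel using hselE
    refine ⟨sel '' t', ht'fin.image _, ?_⟩
    intro f hf
    obtain ⟨v, hvt', hdv⟩ := Set.mem_iUnion₂.1 (ht'cov (Set.mem_image_of_mem Φ hf))
    have hf₀K := (hsel v hvt').1
    have hΦf₀ : Φ (sel v) = v := (hsel v hvt').2
    rw [Set.mem_iUnion₂]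
    refine ⟨sel v, Set.mem_image_of_mem sel hvt', ?_⟩
    rw [Metric.mem_ball]
    set f₀ := sel v with hf₀def
    have hdval : dist (Φ f) v < δ₁ := hdv
    have hcoord : ∀ j : ↥t0, ‖(inner ℂ (Stmt0Aux.Psi ψ (j:ℝ×Euc n)) (f - f₀) : ℂ)‖ ≤ δ₁ := by
      intro j
      have h1 : (inner ℂ (Stmt0Aux.Psi ψ (j:ℝ×Euc n)) (f - f₀) : ℂ) = Φ f j - v j := by
        rw [← hΦf₀, hΦdef]
        simp only
        rw [inner_sub_right]
      rw [h1, show ‖Φ f j - v j‖ = dist (Φ f j) (v j) from (dist_eq_norm _ _).symm]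
      exact le_trans (dist_le_pi_dist (Φ f) v j) hdval.le
    have hnsub : ‖f - f₀‖ ≤ 2*M := by
      have h0 := norm_sub_le f f₀
      have h1 := hMK f hf
      have h2 := hMK f₀ hf₀K
      linarith
    have hptnear : ∀ p ∈ nearS, ‖(inner ℂ (Stmt0Aux.Psi ψ p) (f - f₀) : ℂ)‖ ≤ δ₁ + 2*M*δ₀ := by
      intro p hp
      have hpE := hnearE hp
      obtain ⟨j, hjt0, hpj⟩ := Set.mem_iUnion₂.1 (ht0cov hpE)
      rw [Metric.mem_ball] at hpj
      have hsplit : (inner ℂ (Stmt0Aux.Psi ψ p) (f - f₀) : ℂ)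
          = (inner ℂ (Stmt0Aux.Psi ψ j) (f - f₀) : ℂ)
            + (inner ℂ (Stmt0Aux.Psi ψ p - Stmt0Aux.Psi ψ j) (f - f₀) : ℂ) := by
        rw [← inner_add_left, add_sub_cancel]
      have h1 : ‖(inner ℂ (Stmt0Aux.Psi ψ j) (f - f₀) : ℂ)‖ ≤ δ₁ := hcoord ⟨j, hjt0⟩
      have h2 : ‖(inner ℂ (Stmt0Aux.Psi ψ p - Stmt0Aux.Psi ψ j) (f - f₀) : ℂ)‖
          ≤ ‖Stmt0Aux.Psi ψ p - Stmt0Aux.Psi ψ j‖ * ‖f - f₀‖ := norm_inner_le_norm _ _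
      have h3 : ‖Stmt0Aux.Psi ψ p - Stmt0Aux.Psi ψ j‖ < δ₀ := by
        rw [← dist_eq_norm]
        exact hδ' p (hnearE hp) j (ht0E hjt0) hpj
      have h4 : ‖Stmt0Aux.Psi ψ p - Stmt0Aux.Psi ψ j‖ * ‖f - f₀‖ ≤ δ₀ * (2*M) :=
        mul_le_mul h3.le hnsub (norm_nonneg _) hδ₀0.le
      rw [hsplit]
      refine le_trans (norm_add_le _ _) ?_
      nlinarith
    have hsplitI := Stmt0Aux.split_integral hψ hframe (f - f₀) R
    have hnearInt : (∫ p in nearS, ‖(inner ℂ (Stmt0Aux.Psi ψ p) (f - f₀) : ℂ)‖^2 ∂(lamMeas n))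
        ≤ (δ₁ + 2*M*δ₀)^2 * ν := by
      have hb : ∀ p ∈ nearS,
          ‖(inner ℂ (Stmt0Aux.Psi ψ p) (f - f₀) : ℂ)‖^2 ≤ (δ₁ + 2*M*δ₀)^2 := fun p hp =>
        pow_le_pow_left₀ (norm_nonneg _) (hptnear p hp) 2
      have hmono := setIntegral_mono_on
        ((Stmt0Aux.integrable_W_sq hψ hframe (f - f₀)).integrableOn)
        (integrableOn_const hμnear.ne) (Stmt0Aux.measurableSet_near R) hb
      rw [setIntegral_const, smul_eq_mul, measureReal_def] at hmono
      refine le_trans hmono ?_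
      have hle : (lamMeas n nearS).toReal ≤ ν := ENNReal.toReal_mono hμE.ne
        (measure_mono hnearE)
      nlinarith [sq_nonneg (δ₁ + 2*M*δ₀), ENNReal.toReal_nonneg (a := lamMeas n nearS)]
    have hfarInt : (∫ p in farFrom (basePt n) R,
        ‖(inner ℂ (Stmt0Aux.Psi ψ p) (f - f₀) : ℂ)‖^2 ∂(lamMeas n)) ≤ ε^2/16 := by
      have hb := Stmt0Aux.far_sub_bound hψ hframe f f₀
        (Stmt0Aux.measurableSet_farFrom (basePt n) R)
      have h1 := hRW f hf
      have h2 := hRW f₀ hf₀K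
      linarith
    have hnum : (δ₁ + 2*M*δ₀)^2 * ν ≤ ε^2/4 := by
      have hc : (0:ℝ) < s + 1 := by linarith
      have h2M : 2*M*δ₀ = ε/(8*(s+1)) := by
        rw [hδ₀def]
        field_simp
        ring
      have h3 : δ₁ + 2*M*δ₀ = (3*ε)/(8*(s+1)) := by
        rw [h2M, hδ₁def]
        field_simp
        ring
      have hsum : δ₁ + 2*M*δ₀ ≤ ε/(2*(s+1)) := by
        rw [h3, div_le_div_iff₀ (by positivity) (by positivity)]
        nlinarith [hε.le, hc]
      have hsq : (δ₁ + 2*M*δ₀)^2 ≤ (ε/(2*(s+1)))^2 :=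
        pow_le_pow_left₀ (by positivity) hsum 2
      have h4 : (ε/(2*(s+1)))^2 * ν ≤ ε^2/4 := by
        rw [div_pow, ← hs2, div_mul_eq_mul_div, div_le_div_iff₀ (by positivity) (by norm_num)]
        nlinarith [sq_nonneg ε, hs0, sq_nonneg (ε*s)]
      exact le_trans (mul_le_mul_of_nonneg_right hsq hν0) h4
    have hfinal : ‖f - f₀‖^2 < ε^2 := by
      have hε2 : 0 < ε^2 := by positivity
      linarith [hsplitI, hnearInt, hfarInt, hnum]
    rw [dist_eq_norm]
    nlinarith [norm_nonneg (f - f₀)]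
end
end

section
/- Let n ≥ 1, p > 0, and let φ ∈ L¹(ℝⁿ) be radial, radially non-increasing, and bounded. There is a constant A > 0 depending only on n and p such that for every locally integrable f : ℝⁿ → ℝ with ∫ |f| |φ̃_{(a,b)}| < ∞ for all (a,b) ∈ ℝ^{n+1}_+, and every Borel measure μ on ℝ^{n+1}_+ for which the right-hand side is finite, ∫_{ℝ^{n+1}_+} |⟨f, φ̃_{(a,b)}⟩|^p dμ(a,b) ≤ A ∫_{ℝⁿ} Mf(x)^p Cμ(x) dx, where Mf(x) := sup_{(a,b)∈V_x} |⟨f, φ̃_{(a,b)}⟩| is the non-tangential maximal function. -/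
open MeasureTheory Metric Set
open scoped ENNReal

noncomputable section

set_option maxHeartbeats 1000000

namespace Stmt4


lemma euc_nontrivial {n : ℕ} (hn : 1 ≤ n) : Nontrivial (Euc n) := by
  haveI : Nonempty (Fin n) := ⟨⟨0, hn⟩⟩
  infer_instance

lemma volume_ball_euc {n : ℕ} (hn : 1 ≤ n) (x : Euc n) {r : ℝ} (hr : 0 ≤ r) :
    (volume : Measure (Euc n)) (ball x r)
      = ENNReal.ofReal (r ^ n) * (volume : Measure (Euc n)) (ball 0 1) := by
  haveI := euc_nontrivial hn
  rw [Measure.addHaar_ball volume x hr, finrank_euclideanSpace_fin]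

lemma volume_univ_euc {n : ℕ} (hn : 1 ≤ n) : (volume : Measure (Euc n)) univ = ⊤ := by
  haveI := euc_nontrivial hn
  exact MeasureTheory.measure_univ_of_isAddLeftInvariant volume

lemma phi_nonneg {n : ℕ} (hn : 1 ≤ n) (φ : Euc n → ℝ)
    (hφi : Integrable φ (volume : Measure (Euc n)))
    (hmono : ∀ x y : Euc n, ‖x‖ ≤ ‖y‖ → φ y ≤ φ x) :
    ∀ x, 0 ≤ φ x := by
  by_contra h
  push_neg at h
  obtain ⟨x₀, hx₀⟩ := h
  set c := -φ x₀ with hc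
  have hcpos : 0 < c := by simp [hc]; linarith
  have hsub : (closedBall (0:Euc n) ‖x₀‖)ᶜ ⊆ {y : Euc n | ENNReal.ofReal c ≤ ‖φ y‖₊} := by
    intro y hy
    simp only [mem_compl_iff, mem_closedBall, dist_zero_right, not_le] at hy
    have h1 : φ y ≤ φ x₀ := hmono x₀ y hy.le
    have h2 : c ≤ |φ y| := by rw [abs_of_nonpos (by linarith)]; linarith
    simp only [mem_setOf_eq, ← Real.enorm_eq_ofReal_abs]
    exact ENNReal.ofReal_le_ofReal h2 |>.trans_eq (Real.enorm_eq_ofReal_abs _).symm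
  have hcompl : (volume : Measure (Euc n)) ((closedBall (0:Euc n) ‖x₀‖)ᶜ) = ⊤ := by
    have hadd := measure_add_measure_compl (μ := (volume : Measure (Euc n)))
      (measurableSet_closedBall (x := (0:Euc n)) (ε := ‖x₀‖))
    rw [volume_univ_euc hn] at hadd
    by_contra hne
    exact absurd hadd (by
      exact fun h => (ENNReal.add_ne_top.2 ⟨measure_closedBall_lt_top.ne, hne⟩) h)
  have hmarkov : ENNReal.ofReal c * volume {y : Euc n | ENNReal.ofReal c ≤ ‖φ y‖₊}
      ≤ ∫⁻ y, ‖φ y‖ₑ := mul_meas_ge_le_lintegral₀ (μ := (volume : Measure (Euc n)))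
    (hφi.aestronglyMeasurable.enorm) (ENNReal.ofReal c)
  have htop : (ENNReal.ofReal c) * volume {y : Euc n | ENNReal.ofReal c ≤ ‖φ y‖₊} = ⊤ := by
    have : (volume : Measure (Euc n)) {y | ENNReal.ofReal c ≤ ‖φ y‖₊} = ⊤ :=
      top_unique (hcompl ▸ measure_mono hsub)
    rw [this, ENNReal.mul_top (by simp [ENNReal.ofReal_eq_zero, not_le, hcpos])]
  rw [htop] at hmarkov
  exact absurd (top_unique hmarkov) (by simpa using hφi.2.ne)



lemma lattice {n : ℕ} (hn : 1 ≤ n) {s : ℝ} (hs : 0 < s) :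
    ∃ L : Set (Euc n), L.Countable ∧
      (∀ x : Euc n, ∃ y ∈ L, ‖x - y‖ ≤ s * n / 2) ∧
      (∀ y ∈ L, ∀ z ∈ L, y ≠ z → s ≤ ‖y - z‖) := by
  set ι : (Fin n → ℤ) → Euc n :=
    fun v => (WithLp.equiv 2 (Fin n → ℝ)).symm (fun i => s * (v i)) with hι
  have hcoord : ∀ v i, (ι v) i = s * (v i) := fun v i => rfl
  refine ⟨Set.range ι, Set.countable_range ι, ?_, ?_⟩
  · intro x
    refine ⟨ι (fun i => round (x i / s)), Set.mem_range_self _, ?_⟩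
    have hbd : ∀ i : Fin n, |x i - (ι (fun i => round (x i / s))) i| ≤ s / 2 := by
      intro i
      rw [hcoord]
      have h1 : |x i / s - round (x i / s)| ≤ 1/2 := abs_sub_round (x i / s)
      have : x i - s * round (x i / s) = s * (x i / s - round (x i / s)) := by
        field_simp
      rw [this, abs_mul, abs_of_pos hs]
      nlinarith [abs_nonneg (x i / s - round (x i / s))]
    have hnorm : ‖x - ι (fun i => round (x i / s))‖
        ≤ Real.sqrt (n * (s/2)^2) := by
      rw [EuclideanSpace.norm_eq]
      apply Real.sqrt_le_sqrt
      calc ∑ i, ‖(x - ι (fun i => round (x i / s))) i‖ ^ 2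
          ≤ ∑ _i : Fin n, (s/2)^2 := by
            apply Finset.sum_le_sum
            intro i _
            have := hbd i
            have h0 : ‖(x - ι (fun i => round (x i / s))) i‖ = |x i - (ι (fun i => round (x i / s))) i| := by
              simp [PiLp.sub_apply, Real.norm_eq_abs]
            rw [h0]
            nlinarith [abs_nonneg (x i - (ι (fun i => round (x i / s))) i)]
        _ = n * (s/2)^2 := by simp [Finset.sum_const, Finset.card_univ]
    refine hnorm.trans ?_
    rw [Real.sqrt_mul (by positivity), Real.sqrt_sq (by positivity)]
    have hsq : Real.sqrt n ≤ n := by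
      have h1 : ((n:ℝ)) ≤ (n:ℝ)^2 := by nlinarith [show (1:ℝ) ≤ (n:ℝ) by exact_mod_cast hn]
      calc Real.sqrt n ≤ Real.sqrt ((n:ℝ)^2) := Real.sqrt_le_sqrt h1
        _ = n := Real.sqrt_sq (by positivity)
    nlinarith [Real.sqrt_nonneg (n:ℝ)]
  · rintro y ⟨v, rfl⟩ z ⟨w, rfl⟩ hne
    have hvw : v ≠ w := fun h => hne (by rw [h])
    obtain ⟨i, hi⟩ := Function.ne_iff.1 hvw
    have h1 : (1:ℝ) ≤ |(v i : ℝ) - w i| := by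
      have : v i - w i ≠ 0 := sub_ne_zero.2 hi
      have := Int.one_le_abs this
      calc (1:ℝ) ≤ |(v i - w i : ℤ)| := by exact_mod_cast this
        _ = |(v i : ℝ) - w i| := by push_cast; ring_nf
    have hco : s ≤ |(ι v - ι w) i| := by
      have : (ι v - ι w) i = s * ((v i : ℝ) - w i) := by
        simp [PiLp.sub_apply, hcoord]; ring
      rw [this, abs_mul, abs_of_pos hs]
      nlinarith
    refine hco.trans ?_
    rw [EuclideanSpace.norm_eq]
    have : |(ι v - ι w) i| = Real.sqrt (‖(ι v - ι w) i‖^2) := by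
      rw [Real.sqrt_sq_eq_abs]; simp [Real.norm_eq_abs]
    rw [this]
    apply Real.sqrt_le_sqrt
    exact Finset.single_le_sum (f := fun j => ‖(ι v - ι w) j‖^2) (fun j _ => by positivity) (Finset.mem_univ i)


lemma exists_dyadic {D : ℝ} (hD : 0 < D) : ∃ k : ℤ, (2:ℝ)^k ≤ D ∧ D < 2 * (2:ℝ)^k := by
  refine ⟨⌊Real.logb 2 D⌋, ?_, ?_⟩
  · have h1 : ((⌊Real.logb 2 D⌋ : ℝ)) ≤ Real.logb 2 D := Int.floor_le _
    have h3 := (Real.rpow_le_rpow_left_iff (x := 2) one_lt_two).2 h1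
    rw [Real.rpow_logb (by norm_num) (by norm_num) hD] at h3
    rw [← Real.rpow_intCast (2:ℝ)]
    exact h3
  · have h1 : Real.logb 2 D < (⌊Real.logb 2 D⌋ : ℝ) + 1 := Int.lt_floor_add_one _
    have h3 := (Real.rpow_lt_rpow_left_iff (x := 2) (y := Real.logb 2 D) one_lt_two).2 h1
    rw [Real.rpow_logb (by norm_num) (by norm_num) hD] at h3
    calc D < (2:ℝ) ^ ((⌊Real.logb 2 D⌋ : ℝ) + 1) := h3
      _ = 2 * (2:ℝ)^(⌊Real.logb 2 D⌋) := by
        rw [Real.rpow_add (by norm_num), Real.rpow_one, ← Real.rpow_intCast (2:ℝ)]; ring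


lemma geom_sum {p : ℝ} (hp : 0 < p) (m : ℝ≥0∞) :
    ∑' k : ℤ, (if ENNReal.ofReal ((2:ℝ)^k) < m then (ENNReal.ofReal ((2:ℝ)^(k+2)))^p else 0)
      ≤ ENNReal.ofReal ((4:ℝ)^p * (1 - (2:ℝ)^(-p))⁻¹) * m ^ p := by
  have h2 : (1:ℝ) < 2 := one_lt_two
  rcases eq_or_ne m 0 with rfl | hm0
  · simp
  rcases eq_or_ne m ⊤ with rfl | hmt
  · rw [ENNReal.top_rpow_of_pos hp, ENNReal.mul_top]
    · exact le_top
    · have hc : 0 < (4:ℝ)^p * (1 - (2:ℝ)^(-p))⁻¹ := by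
        have : (2:ℝ)^(-p) < 1 := by
          rw [Real.rpow_neg (by norm_num), inv_lt_one_iff₀]
          right; exact Real.one_lt_rpow_iff_of_pos (by norm_num) |>.2 (Or.inl ⟨h2, hp⟩)
        have h4 : (0:ℝ) < (4:ℝ)^p := Real.rpow_pos_of_pos (by norm_num) p
        exact mul_pos h4 (inv_pos.2 (by linarith))
      simp [ENNReal.ofReal_eq_zero, not_le, hc]
  -- main case
  set M := m.toReal with hM
  have hMpos : 0 < M := ENNReal.toReal_pos hm0 hmt
  have hmM : m = ENNReal.ofReal M := (ENNReal.ofReal_toReal hmt).symm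
  set k₀ : ℤ := ⌊Real.logb 2 M⌋ with hk₀
  set f : ℤ → ℝ≥0∞ := fun k =>
    (if ENNReal.ofReal ((2:ℝ)^k) < m then (ENNReal.ofReal ((2:ℝ)^(k+2)))^p else 0) with hf
  have hsupp : ∀ k : ℤ, f k ≠ 0 → k ≤ k₀ := by
    intro k hk
    rw [hf] at hk
    by_cases hcond : ENNReal.ofReal ((2:ℝ)^k) < m
    · have hlt : (2:ℝ)^k < M := by
        rw [hmM] at hcond
        exact (ENNReal.ofReal_lt_ofReal_iff_of_nonneg (by positivity)).1 hcond
      have : ((k:ℝ)) < Real.logb 2 M := by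
        rw [← Real.rpow_intCast (2:ℝ) k] at hlt
        exact (Real.lt_logb_iff_rpow_lt h2 hMpos).2 hlt
      exact Int.le_floor.2 this.le
    · simp [hcond] at hk
  -- reindex over ℕ
  set g : ℕ → ℝ≥0∞ := fun j => f (k₀ - j) with hg
  have hre : ∑' k : ℤ, f k = ∑' j : ℕ, g j := by
    apply tsum_eq_tsum_of_ne_zero_bij (fun j => k₀ - ((j : Function.support g) : ℕ))
    · intro a b hab
      simp only [sub_right_inj] at hab
      exact Subtype.ext (by exact_mod_cast hab)
    · intro k hk
      have hkle := hsupp k hk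
      refine ⟨⟨(k₀ - k).toNat, ?_⟩, ?_⟩
      · show f (k₀ - (((k₀ - k).toNat : ℕ) : ℤ)) ≠ 0
        rw [show (k₀ - (((k₀ - k).toNat : ℕ) : ℤ)) = k by omega]
        exact hk
      · show k₀ - (((k₀ - k).toNat : ℕ) : ℤ) = k
        omega
    · intro j; rfl
  rw [hre]
  -- per-term bound
  have hterm : ∀ j : ℕ, g j ≤ (ENNReal.ofReal ((4:ℝ)^p) * m ^ p) * (ENNReal.ofReal ((2:ℝ)^(-p)))^j := by
    intro j
    rw [hg, hf]
    simp only []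
    split_ifs with hcond
    · have hbase : (0:ℝ) < (2:ℝ)^(k₀ - (j:ℤ) + 2) := by positivity
      rw [ENNReal.ofReal_rpow_of_pos hbase]
      have hreal : ((2:ℝ)^(k₀ - (j:ℤ) + 2)) ^ p ≤ ((4:ℝ)^p * M^p) * ((2:ℝ)^(-p))^j := by
        have h2k : (2:ℝ)^(k₀:ℤ) ≤ M := by
          have h1 : ((k₀:ℝ)) ≤ Real.logb 2 M := Int.floor_le _
          have h3 := (Real.rpow_le_rpow_left_iff (x := 2) h2).2 h1
          rw [Real.rpow_logb (by norm_num) (by norm_num) hMpos] at h3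
          rw [← Real.rpow_intCast (2:ℝ) k₀]
          exact h3
        have hsplit : (2:ℝ)^(k₀ - (j:ℤ) + 2) = (4 * (2:ℝ)^(k₀:ℤ)) * ((2:ℝ)^(-(1:ℝ)))^j := by
          rw [← Real.rpow_intCast (2:ℝ) (k₀ - (j:ℤ) + 2), ← Real.rpow_intCast (2:ℝ) k₀,
            ← Real.rpow_natCast ((2:ℝ)^(-(1:ℝ))) j, ← Real.rpow_mul (by norm_num)]
          rw [show (4:ℝ) = (2:ℝ)^(2:ℝ) by
            rw [show (2:ℝ)^(2:ℝ) = (2:ℝ)^((2:ℕ):ℝ) by norm_num, Real.rpow_natCast]; norm_num]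
          rw [← Real.rpow_add (by norm_num : (0:ℝ) < 2), ← Real.rpow_add (by norm_num : (0:ℝ) < 2)]
          push_cast
          ring_nf
        rw [hsplit, Real.mul_rpow (by positivity) (by positivity),
          Real.mul_rpow (by positivity) (by positivity)]
        have e1 : ((4:ℝ))^p * (((2:ℝ)^(k₀:ℤ))^p) ≤ (4:ℝ)^p * M^p := by
          apply mul_le_mul_of_nonneg_left _ (by positivity)
          exact Real.rpow_le_rpow (by positivity) h2k hp.le
        have e2 : (((2:ℝ)^(-(1:ℝ)))^(j:ℕ)) ^ p = ((2:ℝ)^(-p))^j := by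
          rw [← Real.rpow_natCast ((2:ℝ)^(-(1:ℝ))) j, ← Real.rpow_mul (by norm_num),
            ← Real.rpow_natCast ((2:ℝ)^(-p)) j, ← Real.rpow_mul (by norm_num),
            ← Real.rpow_mul (by norm_num)]
          ring_nf
        rw [e2]
        exact mul_le_mul_of_nonneg_right e1 (by positivity)
      calc ENNReal.ofReal (((2:ℝ)^(k₀ - (j:ℤ) + 2)) ^ p)
          ≤ ENNReal.ofReal (((4:ℝ)^p * M^p) * ((2:ℝ)^(-p))^j) := ENNReal.ofReal_le_ofReal hreal
        _ = (ENNReal.ofReal ((4:ℝ)^p) * m ^ p) * (ENNReal.ofReal ((2:ℝ)^(-p)))^j := by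
            rw [ENNReal.ofReal_mul (by positivity), ENNReal.ofReal_mul (by positivity),
              ENNReal.ofReal_pow (by positivity), hmM,
              ENNReal.ofReal_rpow_of_pos hMpos]
    · exact zero_le
  calc ∑' j : ℕ, g j ≤ ∑' j : ℕ, (ENNReal.ofReal ((4:ℝ)^p) * m ^ p) * (ENNReal.ofReal ((2:ℝ)^(-p)))^j :=
        ENNReal.tsum_le_tsum hterm
    _ = (ENNReal.ofReal ((4:ℝ)^p) * m ^ p) * (1 - ENNReal.ofReal ((2:ℝ)^(-p)))⁻¹ := by
        rw [ENNReal.tsum_mul_left, ENNReal.tsum_geometric]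
    _ ≤ ENNReal.ofReal ((4:ℝ)^p * (1 - (2:ℝ)^(-p))⁻¹) * m ^ p := by
        have hlt1 : (2:ℝ)^(-p) < 1 := by
          rw [Real.rpow_neg (by norm_num), inv_lt_one_iff₀]
          right; exact Real.one_lt_rpow_iff_of_pos (by norm_num) |>.2 (Or.inl ⟨h2, hp⟩)
        have heq : (1 - ENNReal.ofReal ((2:ℝ)^(-p)))⁻¹ = ENNReal.ofReal ((1 - (2:ℝ)^(-p))⁻¹) := by
          rw [← ENNReal.ofReal_one, ← ENNReal.ofReal_sub _ (by positivity),
            ENNReal.ofReal_inv_of_pos (by linarith)]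
        rw [heq, ENNReal.ofReal_mul (by positivity)]
        apply le_of_eq
        ring

lemma le_supF {n : ℕ} (F : ℝ × Euc n → ℝ≥0∞) (x : Euc n) (q : ℝ × Euc n)
    (h : 0 < q.1 ∧ ‖x - q.2‖ < q.1) :
    F q ≤ ⨆ (q' : ℝ × Euc n) (_ : 0 < q'.1 ∧ ‖x - q'.2‖ < q'.1), F q' := by
  have h1 : F q ≤ ⨆ _ : (0 < q.1 ∧ ‖x - q.2‖ < q.1), F q := le_iSup (fun _ => F q) h
  exact h1.trans (le_iSup (fun q' : ℝ × Euc n =>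
    ⨆ _ : (0 < q'.1 ∧ ‖x - q'.2‖ < q'.1), F q') q)



lemma min_lip {a b c t : ℝ} (ht : 0 ≤ t) (hab : a ≤ b + t) : min a c ≤ min b c + t := by
  rcases le_total b c with h|h
  · rw [min_eq_left h]; exact (min_le_left a c).trans hab
  · rw [min_eq_right h]; exact (min_le_right a c).trans (by linarith)

lemma isOpen_supLt {n : ℕ} (F : ℝ × Euc n → ℝ≥0∞) (c : ℝ≥0∞) :
    IsOpen {x : Euc n | c < ⨆ (q : ℝ × Euc n) (_ : 0 < q.1 ∧ ‖x - q.2‖ < q.1), F q} := by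
  have heq : {x : Euc n | c < ⨆ (q : ℝ × Euc n) (_ : 0 < q.1 ∧ ‖x - q.2‖ < q.1), F q}
      = ⋃ (q : ℝ × Euc n) (_ : 0 < q.1 ∧ c < F q), ball q.2 q.1 := by
    ext x
    simp only [mem_setOf_eq, mem_iUnion, mem_ball, lt_iSup_iff]
    constructor
    · rintro ⟨q, ⟨hq1, hq2⟩, hc⟩
      exact ⟨q, ⟨hq1, hc⟩, by rwa [dist_eq_norm]⟩
    · rintro ⟨q, ⟨hq1, hc⟩, hx⟩
      exact ⟨q, ⟨hq1, by rwa [← dist_eq_norm]⟩, hc⟩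
  rw [heq]
  exact isOpen_iUnion fun q => isOpen_iUnion fun _ => isOpen_ball

lemma measurable_supF {n : ℕ} (F : ℝ × Euc n → ℝ≥0∞) :
    Measurable (fun x : Euc n => ⨆ (q : ℝ × Euc n) (_ : 0 < q.1 ∧ ‖x - q.2‖ < q.1), F q) := by
  apply measurable_of_Ioi
  intro c
  exact (isOpen_supLt F c).measurableSet

lemma measurable_carlesonSup {n : ℕ} (μ : Measure (ℝ × Euc n)) :
    Measurable (carlesonSup μ) := by
  unfold carlesonSup
  exact measurable_supF _

lemma le_carlesonSup {n : ℕ} (μ : Measure (ℝ × Euc n)) (z : Euc n) (p : ℝ × Euc n)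
    (h : 0 < p.1 ∧ ‖z - p.2‖ < p.1) :
    μ (tent p.2 p.1) / (volume : Measure (Euc n)) (ball p.2 p.1) ≤ carlesonSup μ z := by
  unfold carlesonSup
  have h1 : μ (tent p.2 p.1) / (volume : Measure (Euc n)) (ball p.2 p.1)
      ≤ ⨆ _ : (0 < p.1 ∧ ‖z - p.2‖ < p.1),
          μ (tent p.2 p.1) / (volume : Measure (Euc n)) (ball p.2 p.1) :=
    le_iSup (fun _ : (0 < p.1 ∧ ‖z - p.2‖ < p.1) =>
      μ (tent p.2 p.1) / (volume : Measure (Euc n)) (ball p.2 p.1)) h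
  exact h1.trans (le_iSup (fun p' : ℝ × Euc n => ⨆ _ : (0 < p'.1 ∧ ‖z - p'.2‖ < p'.1),
    μ (tent p'.2 p'.1) / (volume : Measure (Euc n)) (ball p'.2 p'.1)) p)

lemma covering {n : ℕ} (hn : 1 ≤ n) (μ : Measure (ℝ × Euc n)) (O : Set (Euc n))
    (hO : MeasurableSet O) (E : Set (ℝ × Euc n))
    (hE : ∀ q ∈ E, 0 < q.1 ∧ ball q.2 q.1 ⊆ O) :
    μ E ≤ ENNReal.ofReal (6 * (512*(n:ℝ))^n) *
      ∫⁻ x in O, carlesonSup μ x ∂(volume : Measure (Euc n)) := by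
  have hnR : (1:ℝ) ≤ n := by exact_mod_cast hn
  have hnpos : (0:ℝ) < n := by linarith
  have hEW : E = ⋃ R : ℕ, (E ∩ {q : ℝ × Euc n | q.1 < R ∧ ‖q.2‖ < R}) := by
    ext q
    simp only [mem_iUnion, mem_inter_iff, mem_setOf_eq]
    constructor
    · intro hq
      obtain ⟨R, hR⟩ := exists_nat_gt (max q.1 ‖q.2‖)
      exact ⟨R, hq, (le_max_left _ _).trans_lt hR, (le_max_right _ _).trans_lt hR⟩
    · rintro ⟨R, hq, _⟩; exact hq
  have hmono : Monotone (fun R : ℕ => E ∩ {q : ℝ × Euc n | q.1 < R ∧ ‖q.2‖ < R}) := by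
    intro R1 R2 h12
    refine inter_subset_inter le_rfl ?_
    rintro q ⟨h1, h2⟩
    have hc : (R1:ℝ) ≤ R2 := by exact_mod_cast h12
    exact ⟨h1.trans_le hc, h2.trans_le hc⟩
  rw [hEW, hmono.measure_iUnion]
  refine iSup_le fun R => ?_
  -- setup
  set Sc : Set (Euc n) := Oᶜ ∪ {y : Euc n | (3*R:ℝ) ≤ ‖y‖} with hSc
  have hScne : Sc.Nonempty := by
    refine ⟨EuclideanSpace.single (⟨0, hn⟩ : Fin n) (3*R), Or.inr ?_⟩
    simp only [mem_setOf_eq, EuclideanSpace.norm_single, Real.norm_eq_abs]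
    rw [abs_of_nonneg (by positivity)]
  set d : Euc n → ℝ := fun y => infDist y Sc with hd
  set e : Euc n → ℝ := fun y => min (d y) (2*R) with he
  have heval : ∀ y : Euc n, e y = min (d y) (2*(R:ℝ)) := fun _ => rfl
  have hdlip : ∀ y z : Euc n, d y ≤ d z + dist y z := fun y z => infDist_le_infDist_add_dist
  have helip : ∀ y z : Euc n, |e y - e z| ≤ dist y z := by
    intro y z
    rw [abs_sub_le_iff]
    constructor
    · have h1 : e y ≤ e z + dist y z := min_lip dist_nonneg (hdlip y z)
      linarith
    · have h1 : e z ≤ e y + dist z y := min_lip dist_nonneg (hdlip z y)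
      rw [dist_comm] at h1
      linarith
  have hedle : ∀ y : Euc n, e y ≤ d y := fun y => min_le_left _ _
  have hinfd : ∀ z : Euc n, 0 < d z → z ∈ O := by
    intro z hz
    by_contra hzO
    have hmem : z ∈ Sc := Or.inl hzO
    have : d z = 0 := infDist_zero_of_mem hmem
    linarith
  have hecont : Continuous e := ((continuous_infDist_pt Sc).min continuous_const)
  -- lattices
  have hs : ∀ k : ℤ, (0:ℝ) < (2:ℝ)^k / (8*n) := fun k => by positivity
  choose L hLc hLcov hLsep using fun k : ℤ => lattice hn (hs k)
  set J : ℤ → Set (Euc n) := fun k => {y ∈ L k | (3/4) * (2:ℝ)^k ≤ e y ∧ e y ≤ 4 * (2:ℝ)^k}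
    with hJdef
  have hJc : ∀ k, (J k).Countable := fun k => (hLc k).mono (sep_subset _ _)
  have hsn : ∀ k : ℤ, ((2:ℝ)^k / (8*n)) * n / 2 = (2:ℝ)^k/16 := by
    intro k; field_simp; ring
  -- coverage
  have hcov : E ∩ {q : ℝ × Euc n | q.1 < R ∧ ‖q.2‖ < R}
      ⊆ ⋃ (k : ℤ), ⋃ y ∈ J k, tent y (4 * e y) := by
    rintro q ⟨hqE, hq1R, hq2R⟩
    obtain ⟨hq1, hqball⟩ := hE q hqE
    have hdb : q.1 ≤ d q.2 := by
      by_contra hcon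
      push_neg at hcon
      obtain ⟨z, hz, hdist⟩ := (infDist_lt_iff hScne).1 hcon
      have hge : q.1 ≤ dist q.2 z := by
        rcases hz with hz | hz
        · by_contra hlt
          push_neg at hlt
          exact hz (hqball (by rw [mem_ball, dist_comm]; exact hlt))
        · have h1 : (3*R:ℝ) ≤ ‖z‖ := hz
          have h2 : ‖z‖ - ‖q.2‖ ≤ dist q.2 z := by
            rw [dist_comm, dist_eq_norm]
            exact (norm_sub_norm_le z q.2)
          linarith
      linarith
    set D := min (d q.2) (R:ℝ) with hD
    have hDpos : 0 < D := lt_min (hq1.trans_le hdb) (hq1.trans hq1R)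
    have haD : q.1 ≤ D := le_min hdb hq1R.le
    obtain ⟨k, hk1, hk2⟩ := exists_dyadic hDpos
    obtain ⟨y, hyL, hyd⟩ := hLcov k q.2
    rw [hsn k] at hyd
    have hwk : (0:ℝ) < (2:ℝ)^k := by positivity
    have hDd : D ≤ d q.2 := min_le_left _ _
    have hDR : D ≤ (R:ℝ) := min_le_right _ _
    have hdy_low : (15/16) * (2:ℝ)^k ≤ d y := by
      have h1 := hdlip q.2 y
      have hdist : dist q.2 y ≤ (2:ℝ)^k/16 := by rwa [dist_eq_norm]
      nlinarith
    have hey_low : (3/4) * (2:ℝ)^k ≤ e y := by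
      rw [heval y]
      apply le_min
      · linarith
      · nlinarith
    have hey_up : e y ≤ 4 * (2:ℝ)^k := by
      rcases le_total (d q.2) (R:ℝ) with hc | hc
      · have hDeq : D = d q.2 := min_eq_left hc
        have hdist : dist y q.2 ≤ (2:ℝ)^k/16 := by
          rw [dist_comm, dist_eq_norm]; exact hyd
        have h1 := hdlip y q.2
        have := hedle y
        nlinarith
      · have hDeq : D = (R:ℝ) := min_eq_right hc
        have h2R : e y ≤ 2*(R:ℝ) := by rw [heval y]; exact min_le_right _ _
        nlinarith
    refine mem_iUnion.2 ⟨k, mem_iUnion₂.2 ⟨y, ⟨hyL, hey_low, hey_up⟩, ?_⟩⟩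
    refine ⟨hq1, ?_⟩
    have h1 : ‖y - q.2‖ ≤ (2:ℝ)^k/16 := by rw [norm_sub_rev]; exact hyd
    nlinarith
  -- tent measure bound
  have htb : ∀ k : ℤ, ∀ y ∈ J k, μ (tent y (4 * e y)) ≤
      ENNReal.ofReal ((512*(n:ℝ))^n)
        * ∫⁻ z in ball y ((2:ℝ)^k/(16*n)), carlesonSup μ z ∂(volume : Measure (Euc n)) := by
    intro k y hy
    obtain ⟨hyL, hey_low, hey_up⟩ := hy
    have hwk : (0:ℝ) < (2:ℝ)^k := by positivity
    have heypos : 0 < e y := by nlinarith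
    set δ := (2:ℝ)^k/(16*n) with hδ
    have hδpos : 0 < δ := by positivity
    have hδle : δ ≤ (2:ℝ)^k/16 := by
      rw [hδ]
      apply div_le_div_of_nonneg_left hwk.le (by norm_num)
      nlinarith
    have hkey : ∀ z ∈ ball y δ,
        μ (tent y (4 * e y)) ≤ carlesonSup μ z * volume (ball y (4 * e y)) := by
      intro z hz
      have hcond : 0 < ((4 * e y, y) : ℝ × Euc n).1
          ∧ ‖z - ((4 * e y, y) : ℝ × Euc n).2‖ < ((4 * e y, y) : ℝ × Euc n).1 := by
        constructor
        · show 0 < 4 * e y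
          linarith
        · show ‖z - y‖ < 4 * e y
          rw [← dist_eq_norm]
          calc dist z y < δ := mem_ball.1 hz
            _ ≤ (2:ℝ)^k/16 := hδle
            _ < 4 * e y := by nlinarith
      have hcs : μ (tent y (4 * e y)) / volume (ball y (4 * e y)) ≤ carlesonSup μ z :=
        le_carlesonSup μ z ((4 * e y, y) : ℝ × Euc n) hcond
      rwa [ENNReal.div_le_iff_le_mul
        (Or.inl (measure_ball_pos volume y (by linarith)).ne')
        (Or.inl measure_ball_lt_top.ne)] at hcs
    have hball_vol : volume (ball y (4 * e y))
        ≤ ENNReal.ofReal ((512*(n:ℝ))^n) * volume (ball y δ) := by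
      rw [volume_ball_euc hn y (by positivity : (0:ℝ) ≤ 4 * e y),
        volume_ball_euc hn y hδpos.le, ← mul_assoc, ← ENNReal.ofReal_mul (by positivity)]
      apply mul_le_mul_left
      apply ENNReal.ofReal_le_ofReal
      have h1 : 4 * e y ≤ 512*n*δ := by
        rw [hδ]
        have : 512*(n:ℝ)*((2:ℝ)^k/(16*n)) = 32 * (2:ℝ)^k := by field_simp; ring
        rw [this]
        nlinarith
      calc (4 * e y)^n ≤ (512*(n:ℝ)*δ)^n := pow_le_pow_left₀ (by positivity) h1 n
        _ = (512*(n:ℝ))^n * δ^n := mul_pow _ _ n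
    have hint : μ (tent y (4 * e y)) * volume (ball y δ) ≤
        (ENNReal.ofReal ((512*(n:ℝ))^n)
          * ∫⁻ z in ball y δ, carlesonSup μ z ∂(volume : Measure (Euc n)))
          * volume (ball y δ) := by
      calc μ (tent y (4 * e y)) * volume (ball y δ)
          = ∫⁻ _z in ball y δ, μ (tent y (4 * e y)) ∂(volume : Measure (Euc n)) := by
            rw [setLIntegral_const]
        _ ≤ ∫⁻ z in ball y δ, carlesonSup μ z * volume (ball y (4 * e y))
              ∂(volume : Measure (Euc n)) :=
            setLIntegral_mono ((measurable_carlesonSup μ).mul_const _) hkey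
        _ = (∫⁻ z in ball y δ, carlesonSup μ z ∂(volume : Measure (Euc n)))
              * volume (ball y (4 * e y)) := by
            rw [lintegral_mul_const _ (measurable_carlesonSup μ)]
        _ ≤ (∫⁻ z in ball y δ, carlesonSup μ z ∂(volume : Measure (Euc n)))
              * (ENNReal.ofReal ((512*(n:ℝ))^n) * volume (ball y δ)) :=
            mul_le_mul_right hball_vol _
        _ = (ENNReal.ofReal ((512*(n:ℝ))^n)
              * ∫⁻ z in ball y δ, carlesonSup μ z ∂(volume : Measure (Euc n)))
              * volume (ball y δ) := by ring
    exact (ENNReal.mul_le_mul_iff_left (measure_ball_pos volume y hδpos).ne'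
      measure_ball_lt_top.ne).1 hint
  -- annuli
  set A : ℤ → Set (Euc n) := fun k => {z | (1/2) * (2:ℝ)^k ≤ e z ∧ e z ≤ 5 * (2:ℝ)^k} with hA
  have hAmeas : ∀ k, MeasurableSet (A k) := by
    intro k
    exact (measurableSet_le measurable_const hecont.measurable).inter
      (measurableSet_le hecont.measurable measurable_const)
  have hball_sub : ∀ k : ℤ, ∀ y ∈ J k, ball y ((2:ℝ)^k/(16*n)) ⊆ O ∩ A k := by
    intro k y hy z hz
    obtain ⟨hyL, hey_low, hey_up⟩ := hy
    have hwk : (0:ℝ) < (2:ℝ)^k := by positivity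
    have hδle : (2:ℝ)^k/(16*n) ≤ (2:ℝ)^k/16 := by
      apply div_le_div_of_nonneg_left hwk.le (by norm_num)
      nlinarith
    have hdist : dist z y ≤ (2:ℝ)^k/16 := (mem_ball.1 hz).le.trans hδle
    have hez : |e z - e y| ≤ (2:ℝ)^k/16 := (helip z y).trans hdist
    rw [abs_sub_le_iff] at hez
    constructor
    · apply hinfd
      have h1 : e z ≥ e y - (2:ℝ)^k/16 := by linarith [hez.2]
      have h2 := hedle z
      nlinarith
    · constructor
      · have := hez.2; nlinarith
      · have := hez.1; nlinarith
  have hdisj : ∀ k : ℤ, (J k).PairwiseDisjoint (fun y => ball y ((2:ℝ)^k/(16*n))) := by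
    intro k y hy z hz hyz
    apply ball_disjoint_ball
    rw [dist_eq_norm]
    have hsep := hLsep k y hy.1 z hz.1 hyz
    have : (2:ℝ)^k/(16*n) + (2:ℝ)^k/(16*n) = (2:ℝ)^k/(8*n) := by ring
    rw [this]
    exact hsep
  -- overlap count
  have hcount : ∀ z : Euc n, (∑' k : ℤ, (A k).indicator (fun _ => (1:ℝ≥0∞)) z) ≤ 6 := by
    intro z
    by_cases hez : 0 < e z
    · set ka := ⌈Real.logb 2 (e z/5)⌉ with hka
      set kb := ⌊Real.logb 2 (2 * e z)⌋ with hkb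
      have hmemk : ∀ k : ℤ, z ∈ A k → ka ≤ k ∧ k ≤ kb := by
        intro k hzA
        obtain ⟨h1, h2⟩ := hzA
        have hwk : (0:ℝ) < (2:ℝ)^k := by positivity
        constructor
        · apply Int.ceil_le.2
          rw [Real.logb_le_iff_le_rpow one_lt_two (by linarith)]
          rw [Real.rpow_intCast]
          linarith
        · apply Int.le_floor.2
          rw [Real.le_logb_iff_rpow_le one_lt_two (by linarith)]
          rw [Real.rpow_intCast]
          linarith
      have hsupz : ∀ k : ℤ, k ∉ Finset.Icc ka kb →
          (A k).indicator (fun _ => (1:ℝ≥0∞)) z = 0 := by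
        intro k hk
        apply Set.indicator_of_notMem
        intro hzA
        obtain ⟨hk1, hk2⟩ := hmemk k hzA
        exact hk (Finset.mem_Icc.2 ⟨hk1, hk2⟩)
      rw [tsum_eq_sum hsupz]
      have hcard : (Finset.Icc ka kb).card ≤ 6 := by
        rw [Int.card_Icc]
        have h1 : (ka:ℝ) ≥ Real.logb 2 (e z/5) := Int.le_ceil _
        have h2 : (kb:ℝ) ≤ Real.logb 2 (2 * e z) := Int.floor_le _
        have h3 : Real.logb 2 (2 * e z) ≤ Real.logb 2 (16 * (e z/5)) + 0 := by
          rw [add_zero]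
          apply (Real.logb_le_logb one_lt_two (by linarith) (by linarith)).2
          linarith
        have h16 : Real.logb 2 (16:ℝ) = 4 := by
          rw [show (16:ℝ) = (2:ℝ)^(4:ℕ) by norm_num, Real.logb_pow,
            Real.logb_self_eq_one (by norm_num)]
          norm_num
        have h4 : Real.logb 2 (16 * (e z/5)) = 4 + Real.logb 2 (e z/5) := by
          rw [Real.logb_mul (by norm_num) (ne_of_gt (show (0:ℝ) < e z/5 by linarith)), h16]
        have h5 : kb - ka ≤ 4 := by
          have h6 : ((kb - ka : ℤ):ℝ) ≤ 4 := by push_cast; linarith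
          exact_mod_cast h6
        omega
      calc ∑ k ∈ Finset.Icc ka kb, (A k).indicator (fun _ => (1:ℝ≥0∞)) z
          ≤ ∑ _k ∈ Finset.Icc ka kb, (1:ℝ≥0∞) := by
            apply Finset.sum_le_sum
            intro k _
            classical
            by_cases hzk : z ∈ A k
            · rw [Set.indicator_of_mem hzk]
            · rw [Set.indicator_of_notMem hzk]; exact zero_le
        _ = (Finset.Icc ka kb).card := by rw [Finset.sum_const, nsmul_eq_mul, mul_one]
        _ ≤ 6 := by exact_mod_cast hcard
    · have hzero : ∀ k : ℤ, (A k).indicator (fun _ => (1:ℝ≥0∞)) z = 0 := by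
        intro k
        apply Set.indicator_of_notMem
        rintro ⟨h1, _⟩
        have hwk : (0:ℝ) < (2:ℝ)^k := by positivity
        push_neg at hez
        nlinarith
      simp [hzero]
  -- assembly
  have hC : Measurable (carlesonSup μ) := measurable_carlesonSup μ
  calc μ (E ∩ {q : ℝ × Euc n | q.1 < R ∧ ‖q.2‖ < R})
      ≤ μ (⋃ (k : ℤ), ⋃ y ∈ J k, tent y (4 * e y)) := measure_mono hcov
    _ ≤ ∑' k : ℤ, μ (⋃ y ∈ J k, tent y (4 * e y)) := measure_iUnion_le _
    _ ≤ ∑' k : ℤ, ∑' (y : J k), μ (tent (y:Euc n) (4 * e y)) :=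
        ENNReal.tsum_le_tsum fun k => measure_biUnion_le μ (hJc k) _
    _ ≤ ∑' k : ℤ, ∑' (y : J k), ENNReal.ofReal ((512*(n:ℝ))^n)
          * ∫⁻ z in ball (y:Euc n) ((2:ℝ)^k/(16*n)), carlesonSup μ z ∂(volume : Measure (Euc n)) :=
        ENNReal.tsum_le_tsum fun k => ENNReal.tsum_le_tsum fun y => htb k y y.2
    _ = ENNReal.ofReal ((512*(n:ℝ))^n) * ∑' k : ℤ, ∑' (y : J k),
          ∫⁻ z in ball (y:Euc n) ((2:ℝ)^k/(16*n)), carlesonSup μ z ∂(volume : Measure (Euc n)) := by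
        simp_rw [ENNReal.tsum_mul_left]
    _ = ENNReal.ofReal ((512*(n:ℝ))^n) * ∑' k : ℤ,
          ∫⁻ z in ⋃ (y : J k), ball (y:Euc n) ((2:ℝ)^k/(16*n)), carlesonSup μ z
            ∂(volume : Measure (Euc n)) := by
        congr 1
        apply tsum_congr
        intro k
        haveI := (hJc k).to_subtype
        rw [lintegral_iUnion (fun (y : J k) => measurableSet_ball)
          (fun (y y' : J k) hyy' => hdisj k y.2 y'.2 (Subtype.coe_injective.ne hyy'))]
    _ ≤ ENNReal.ofReal ((512*(n:ℝ))^n) * ∑' k : ℤ,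
          ∫⁻ z in O ∩ A k, carlesonSup μ z ∂(volume : Measure (Euc n)) := by
        apply mul_le_mul_right
        apply ENNReal.tsum_le_tsum
        intro k
        apply lintegral_mono_set
        apply iUnion_subset
        intro y
        exact hball_sub k y y.2
    _ = ENNReal.ofReal ((512*(n:ℝ))^n) * ∑' k : ℤ,
          ∫⁻ z in O, (A k).indicator (fun _ => (1:ℝ≥0∞)) z * carlesonSup μ z
            ∂(volume : Measure (Euc n)) := by
        congr 1
        apply tsum_congr
        intro k
        rw [inter_comm]
        rw [← Measure.restrict_restrict (hAmeas k)]
        rw [← lintegral_indicator (hAmeas k)]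
        congr 1
        funext z
        classical
        by_cases hzk : z ∈ A k
        · rw [Set.indicator_of_mem hzk, Set.indicator_of_mem hzk, one_mul]
        · rw [Set.indicator_of_notMem hzk, Set.indicator_of_notMem hzk, zero_mul]
    _ = ENNReal.ofReal ((512*(n:ℝ))^n) *
          ∫⁻ z in O, ∑' k : ℤ, (A k).indicator (fun _ => (1:ℝ≥0∞)) z * carlesonSup μ z
            ∂(volume : Measure (Euc n)) := by
        congr 1
        rw [← lintegral_tsum]
        intro k
        exact ((measurable_const.indicator (hAmeas k)).mul hC).aemeasurable
    _ ≤ ENNReal.ofReal ((512*(n:ℝ))^n) *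
          ∫⁻ z in O, 6 * carlesonSup μ z ∂(volume : Measure (Euc n)) := by
        apply mul_le_mul_right
        apply lintegral_mono
        intro z
        show (∑' k : ℤ, (A k).indicator (fun _ => (1:ℝ≥0∞)) z * carlesonSup μ z)
          ≤ 6 * carlesonSup μ z
        rw [ENNReal.tsum_mul_right]
        exact mul_le_mul_left (hcount z) _
    _ = ENNReal.ofReal (6 * (512*(n:ℝ))^n) *
          ∫⁻ x in O, carlesonSup μ x ∂(volume : Measure (Euc n)) := by
        rw [lintegral_const_mul' _ _ (by norm_num : (6:ℝ≥0∞) ≠ ⊤)]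
        rw [ENNReal.ofReal_mul (by norm_num : (0:ℝ) ≤ 6)]
        rw [show ENNReal.ofReal (6:ℝ) = (6:ℝ≥0∞) by
          rw [show ((6:ℝ≥0∞)) = ((6:ℕ):ℝ≥0∞) by norm_num, ← ENNReal.ofReal_natCast]; norm_num]
        ring



lemma Tcont {n : ℕ} (hn : 1 ≤ n) (φ : Euc n → ℝ)
    (hφi : Integrable φ (volume : Measure (Euc n)))
    (hrad : ∀ x y : Euc n, ‖x‖ = ‖y‖ → φ x = φ y)
    (hmono : ∀ x y : Euc n, ‖x‖ ≤ ‖y‖ → φ y ≤ φ x)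
    (hbd : ∃ M : ℝ, ∀ x : Euc n, |φ x| ≤ M)
    (f : Euc n → ℝ) (hf : LocallyIntegrable f (volume : Measure (Euc n)))
    (H : ∀ q : ℝ × Euc n, 0 < q.1 →
      Integrable (fun x => |f x| * |(q.1 ^ (-(n : ℝ)) : ℝ) * φ ((q.1)⁻¹ • (x - q.2))|)
        (volume : Measure (Euc n))) :
    ContinuousOn (fun q : ℝ × Euc n =>
      ∫ y, f y * ((q.1 ^ (-(n : ℝ)) : ℝ) * φ ((q.1)⁻¹ • (y - q.2))))
      {q : ℝ × Euc n | 0 < q.1} := by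
  obtain ⟨M, hM⟩ := hbd
  have hM0 : 0 ≤ M := le_trans (abs_nonneg _) (hM 0)
  have hφ0 : ∀ x, 0 ≤ φ x := phi_nonneg hn φ hφi hmono
  set u : Euc n := EuclideanSpace.single (⟨0, hn⟩ : Fin n) (1:ℝ) with hu
  have hunorm : ‖u‖ = 1 := by simp [hu, EuclideanSpace.norm_single]
  set ψ : ℝ → ℝ := fun t => φ ((max t 0) • u) with hψ
  have hψanti : Antitone ψ := by
    intro t1 t2 h12
    apply hmono
    simp only [norm_smul, hunorm, mul_one, Real.norm_eq_abs]
    rw [abs_of_nonneg (le_max_right _ _), abs_of_nonneg (le_max_right _ _)]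
    exact max_le_max h12 le_rfl
  have hφψ : ∀ z : Euc n, φ z = ψ ‖z‖ := by
    intro z
    apply hrad
    simp only [norm_smul, hunorm, mul_one, Real.norm_eq_abs]
    rw [max_eq_left (norm_nonneg z), abs_of_nonneg (norm_nonneg z)]
  have hψm : Measurable ψ := hψanti.measurable
  have hψbd : ∀ t, ψ t ≤ M := fun t => le_trans (le_abs_self _) (hM _)
  have hψ0 : ∀ t, 0 ≤ ψ t := fun t => hφ0 _
  have hD : Set.Countable {t : ℝ | ¬ContinuousAt ψ t} := hψanti.countable_not_continuousAt
  have hrw : (fun q : ℝ × Euc n =>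
        ∫ y, f y * ((q.1 ^ (-(n : ℝ)) : ℝ) * φ ((q.1)⁻¹ • (y - q.2))))
      = fun q : ℝ × Euc n =>
        ∫ y, f y * ((q.1 ^ (-(n : ℝ)) : ℝ) * ψ ‖(q.1)⁻¹ • (y - q.2)‖) := by
    funext q
    congr 1
    funext y
    rw [hφψ]
  rw [hrw]
  apply continuousOn_of_forall_continuousAt
  intro q₀ hq₀
  have ha₀ : 0 < q₀.1 := hq₀
  set a₀ := q₀.1 with ha₀def
  set b₀ := q₀.2 with hb₀def
  set a' : ℝ := (5/2) * a₀ with ha'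
  have ha'pos : 0 < a' := by rw [ha']; linarith
  set C1 : ℝ := (3*a₀/4) ^ (-(n:ℝ)) * M with hC1
  set C2 : ℝ := (3*a₀/4) ^ (-(n:ℝ)) * (a' ^ ((n:ℝ))) with hC2
  set bound : Euc n → ℝ := fun y =>
    (closedBall b₀ (a₀/2)).indicator (fun y' => C1 * |f y'|) y
      + C2 * (|f y| * |(a' ^ (-(n : ℝ)) : ℝ) * φ ((a')⁻¹ • (y - b₀))|) with hbound
  have hbound_int : Integrable bound (volume : Measure (Euc n)) := by
    apply Integrable.add
    · have h1 : IntegrableOn f (closedBall b₀ (a₀/2)) (volume : Measure (Euc n)) :=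
        hf.integrableOn_isCompact (isCompact_closedBall _ _)
      have h2 : IntegrableOn (fun x => C1 * |f x|) (closedBall b₀ (a₀/2))
          (volume : Measure (Euc n)) := h1.abs.const_mul C1
      exact h2.integrable_indicator measurableSet_closedBall
    · exact (H (a', b₀) (by exact ha'pos)).const_mul C2
  -- the parametrized integrand
  apply MeasureTheory.continuousAt_of_dominated (bound := bound)
    (F := fun (q : ℝ × Euc n) (y : Euc n) =>
      f y * ((q.1 ^ (-(n : ℝ)) : ℝ) * ψ ‖(q.1)⁻¹ • (y - q.2)‖))
  · -- AESM
    apply Filter.Eventually.of_forall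
    intro q
    apply (hf.aestronglyMeasurable).mul
    apply Measurable.aestronglyMeasurable
    apply Measurable.const_mul
    exact hψm.comp (by fun_prop : Continuous fun y : Euc n => ‖(q.1)⁻¹ • (y - q.2)‖).measurable
  · -- bound
    have hUopen : IsOpen {q : ℝ × Euc n | 3*a₀/4 < q.1 ∧ q.1 < 5*a₀/4 ∧ ‖q.2 - b₀‖ < a₀/4} := by
      apply IsOpen.inter (isOpen_lt continuous_const continuous_fst)
      apply IsOpen.inter (isOpen_lt continuous_fst continuous_const)
      exact isOpen_lt ((continuous_snd.sub continuous_const).norm) continuous_const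
    have hq₀U : q₀ ∈ {q : ℝ × Euc n | 3*a₀/4 < q.1 ∧ q.1 < 5*a₀/4 ∧ ‖q.2 - b₀‖ < a₀/4} := by
      refine ⟨by rw [← ha₀def]; linarith, by rw [← ha₀def]; linarith, ?_⟩
      rw [← hb₀def]
      simp only [sub_self, norm_zero]
      linarith
    filter_upwards [hUopen.mem_nhds hq₀U] with q hq
    apply Filter.Eventually.of_forall
    intro y
    obtain ⟨hq1, hq2, hq3⟩ := hq
    have hq1pos : 0 < q.1 := by linarith
    have hrp : (0:ℝ) < q.1 ^ (-(n:ℝ)) := Real.rpow_pos_of_pos hq1pos _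
    have hrp_le : q.1 ^ (-(n:ℝ)) ≤ (3*a₀/4) ^ (-(n:ℝ)) := by
      apply Real.rpow_le_rpow_of_nonpos (by linarith) hq1.le
      exact neg_nonpos.2 (by exact_mod_cast Nat.zero_le n)
    have hnorm_eq : ‖(q.1)⁻¹ • (y - q.2)‖ = ‖y - q.2‖ / q.1 := by
      rw [norm_smul, Real.norm_eq_abs, abs_of_pos (inv_pos.2 hq1pos), inv_mul_eq_div]
    have hFabs : ‖f y * ((q.1 ^ (-(n : ℝ)) : ℝ) * ψ ‖(q.1)⁻¹ • (y - q.2)‖)‖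
        = |f y| * (q.1 ^ (-(n:ℝ)) * ψ ‖(q.1)⁻¹ • (y - q.2)‖) := by
      rw [Real.norm_eq_abs, abs_mul, abs_mul]
      rw [abs_of_pos hrp, abs_of_nonneg (hψ0 _)]
    rw [hFabs]
    rcases le_or_gt ‖y - b₀‖ (a₀/2) with hy | hy
    · -- near center
      have hmem : y ∈ closedBall b₀ (a₀/2) := by
        rw [mem_closedBall, dist_eq_norm]; exact hy
      have hterm1 : (closedBall b₀ (a₀/2)).indicator (fun y' => C1 * |f y'|) y = C1 * |f y| :=
        Set.indicator_of_mem hmem _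
      have h2 : (0:ℝ) ≤ C2 * (|f y| * |(a' ^ (-(n : ℝ)) : ℝ) * φ ((a')⁻¹ • (y - b₀))|) := by
        apply mul_nonneg _ (mul_nonneg (abs_nonneg _) (abs_nonneg _))
        rw [hC2]
        positivity
      rw [hbound]
      simp only []
      rw [hterm1]
      have hmul : q.1 ^ (-(n:ℝ)) * ψ ‖(q.1)⁻¹ • (y - q.2)‖ ≤ (3*a₀/4) ^ (-(n:ℝ)) * M :=
        mul_le_mul hrp_le (hψbd _) (hψ0 _)
          (Real.rpow_pos_of_pos (show (0:ℝ) < 3*a₀/4 by linarith) _).le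
      have hstep : |f y| * (q.1 ^ (-(n:ℝ)) * ψ ‖(q.1)⁻¹ • (y - q.2)‖) ≤ C1 * |f y| := by
        calc |f y| * (q.1 ^ (-(n:ℝ)) * ψ ‖(q.1)⁻¹ • (y - q.2)‖)
            ≤ |f y| * ((3*a₀/4) ^ (-(n:ℝ)) * M) :=
              mul_le_mul_of_nonneg_left hmul (abs_nonneg _)
          _ = C1 * |f y| := by rw [hC1]; ring
      linarith
    · -- far from center
      have hterm1 : (closedBall b₀ (a₀/2)).indicator (fun y' => C1 * |f y'|) y = 0 := by
        apply Set.indicator_of_notMem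
        rw [mem_closedBall, dist_eq_norm]
        linarith
      have hkey : ‖y - b₀‖ / a' ≤ ‖y - q.2‖ / q.1 := by
        have h1 : ‖y - b₀‖ - a₀/4 ≤ ‖y - q.2‖ := by
          have h2 : ‖y - b₀‖ ≤ ‖y - q.2‖ + ‖q.2 - b₀‖ := by
            calc ‖y - b₀‖ = ‖(y - q.2) + (q.2 - b₀)‖ := by
                  rw [show y - b₀ = (y - q.2) + (q.2 - b₀) by abel]
              _ ≤ ‖y - q.2‖ + ‖q.2 - b₀‖ := norm_add_le _ _
          linarith
        rw [div_le_div_iff₀ ha'pos hq1pos, ha']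
        nlinarith [norm_nonneg (y - q.2)]
      have hψle : ψ (‖(q.1)⁻¹ • (y - q.2)‖) ≤ ψ (‖y - b₀‖ / a') := by
        apply hψanti
        rw [hnorm_eq]
        exact hkey
      have hψeq : φ ((a')⁻¹ • (y - b₀)) = ψ (‖y - b₀‖ / a') := by
        rw [hφψ, norm_smul, Real.norm_eq_abs, abs_of_pos (inv_pos.2 ha'pos), inv_mul_eq_div]
      have ha'rp : (0:ℝ) < a' ^ (-(n:ℝ)) := Real.rpow_pos_of_pos ha'pos _
      have hsecond : C2 * (|f y| * |(a' ^ (-(n : ℝ)) : ℝ) * φ ((a')⁻¹ • (y - b₀))|)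
          = (3*a₀/4) ^ (-(n:ℝ)) * (|f y| * ψ (‖y - b₀‖ / a')) := by
        rw [hψeq, abs_mul, abs_of_pos ha'rp, abs_of_nonneg (hψ0 _), hC2]
        have hcancel : a' ^ ((n:ℝ)) * a' ^ (-(n:ℝ)) = 1 := by
          rw [← Real.rpow_add ha'pos]
          simp
        calc (3*a₀/4) ^ (-(n:ℝ)) * (a' ^ ((n:ℝ))) * (|f y| * (a' ^ (-(n:ℝ)) * ψ (‖y - b₀‖ / a')))
            = (3*a₀/4) ^ (-(n:ℝ)) * (a' ^ ((n:ℝ)) * a' ^ (-(n:ℝ))) * (|f y| * ψ (‖y - b₀‖ / a')) := by ring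
          _ = (3*a₀/4) ^ (-(n:ℝ)) * (|f y| * ψ (‖y - b₀‖ / a')) := by rw [hcancel, mul_one]
      rw [hbound]
      simp only []
      rw [hterm1, hsecond, zero_add]
      have hmul : q.1 ^ (-(n:ℝ)) * ψ ‖(q.1)⁻¹ • (y - q.2)‖
          ≤ (3*a₀/4) ^ (-(n:ℝ)) * ψ (‖y - b₀‖ / a') :=
        mul_le_mul hrp_le hψle (hψ0 _)
          (Real.rpow_pos_of_pos (show (0:ℝ) < 3*a₀/4 by linarith) _).le
      calc |f y| * (q.1 ^ (-(n:ℝ)) * ψ ‖(q.1)⁻¹ • (y - q.2)‖)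
          ≤ |f y| * ((3*a₀/4) ^ (-(n:ℝ)) * ψ (‖y - b₀‖ / a')) :=
            mul_le_mul_of_nonneg_left hmul (abs_nonneg _)
        _ = (3*a₀/4) ^ (-(n:ℝ)) * (|f y| * ψ (‖y - b₀‖ / a')) := by ring
  · exact hbound_int
  · -- a.e. continuity
    have hnull : (volume : Measure (Euc n)) {y : Euc n | ‖y - b₀‖/a₀ ∈ {t : ℝ | ¬ContinuousAt ψ t}} = 0 := by
      haveI := euc_nontrivial hn
      have hsub : {y : Euc n | ‖y - b₀‖/a₀ ∈ {t : ℝ | ¬ContinuousAt ψ t}}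
          ⊆ ⋃ t ∈ {t : ℝ | ¬ContinuousAt ψ t}, sphere b₀ (a₀ * t) := by
        intro y hy
        refine mem_biUnion hy ?_
        rw [mem_sphere, dist_eq_norm]
        field_simp
      refine measure_mono_null hsub ?_
      apply (measure_biUnion_null_iff hD).2
      intro t _
      exact Measure.addHaar_sphere volume b₀ (a₀ * t)
    have hae : ∀ᵐ y ∂(volume : Measure (Euc n)),
        y ∉ {y : Euc n | ‖y - b₀‖/a₀ ∈ {t : ℝ | ¬ContinuousAt ψ t}} :=
      measure_eq_zero_iff_ae_notMem.1 hnull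
    filter_upwards [hae] with y hy'
    have hy : ContinuousAt ψ (‖y - b₀‖/a₀) := not_not.1 fun hc => hy' hc
    have hval : ‖(a₀)⁻¹ • (y - b₀)‖ = ‖y - b₀‖/a₀ := by
      rw [norm_smul, Real.norm_eq_abs, abs_of_pos (inv_pos.2 ha₀), inv_mul_eq_div]
    apply ContinuousAt.mul continuousAt_const
    apply ContinuousAt.mul
    · exact (Real.continuousAt_rpow_const a₀ _ (Or.inl ha₀.ne')).comp continuous_fst.continuousAt
    · have hinner : ContinuousAt (fun q : ℝ × Euc n => ‖(q.1)⁻¹ • (y - q.2)‖) q₀ := by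
        apply ContinuousAt.norm
        exact ContinuousAt.smul (continuous_fst.continuousAt.inv₀ ha₀.ne')
          ((continuous_const.sub continuous_snd).continuousAt)
      have hψc : ContinuousAt ψ (‖(q₀.1)⁻¹ • (y - q₀.2)‖) := by
        rw [← ha₀def, ← hb₀def, hval]
        exact hy
      exact ContinuousAt.comp (g := ψ)
        (f := fun q : ℝ × Euc n => ‖(q.1)⁻¹ • (y - q.2)‖) hψc hinner


end Stmt4

open Stmt4

/-- Lemma 2.2, Stein's Carleson measure estimate: there is A = A(n,p) such
that ∫ |⟨f, φ̃_{(a,b)}⟩|^p dμ ≤ A ∫ (Mf)^p Cμ dx for every admissible φ, f and Borel μ. -/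
theorem statement4 (n : ℕ) (hn : 1 ≤ n) (p : ℝ) (hp : 0 < p) :
    ∃ A : ℝ, 0 < A ∧
      ∀ φ : Euc n → ℝ, Integrable φ (volume : Measure (Euc n)) →
        (∀ x y : Euc n, ‖x‖ = ‖y‖ → φ x = φ y) →
        (∀ x y : Euc n, ‖x‖ ≤ ‖y‖ → φ y ≤ φ x) →
        (∃ M : ℝ, ∀ x : Euc n, |φ x| ≤ M) →
        ∀ f : Euc n → ℝ, LocallyIntegrable f (volume : Measure (Euc n)) →
          (∀ q : ℝ × Euc n, 0 < q.1 →
            Integrable (fun x => |f x| * |(q.1 ^ (-(n : ℝ)) : ℝ) * φ ((q.1)⁻¹ • (x - q.2))|)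
              (volume : Measure (Euc n))) →
          ∀ μ : Measure (ℝ × Euc n), μ {q : ℝ × Euc n | q.1 ≤ 0} = 0 →
            (∫⁻ x, (⨆ (q : ℝ × Euc n) (_ : 0 < q.1 ∧ ‖x - q.2‖ < q.1),
                ENNReal.ofReal |∫ y, f y * ((q.1 ^ (-(n : ℝ)) : ℝ) * φ ((q.1)⁻¹ • (y - q.2)))|) ^ p
                * carlesonSup μ x ∂(volume : Measure (Euc n))) ≠ ⊤ →
            (∫⁻ q, (ENNReal.ofReal
                  |∫ y, f y * ((q.1 ^ (-(n : ℝ)) : ℝ) * φ ((q.1)⁻¹ • (y - q.2)))|) ^ p ∂μ)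
              ≤ ENNReal.ofReal A *
                ∫⁻ x, (⨆ (q : ℝ × Euc n) (_ : 0 < q.1 ∧ ‖x - q.2‖ < q.1),
                  ENNReal.ofReal |∫ y, f y * ((q.1 ^ (-(n : ℝ)) : ℝ) * φ ((q.1)⁻¹ • (y - q.2)))|) ^ p
                  * carlesonSup μ x ∂(volume : Measure (Euc n)) := by
  have hnpos : (0:ℝ) < n := by exact_mod_cast hn
  have h2p : (2:ℝ)^(-p) < 1 := by
    rw [Real.rpow_neg (by norm_num), inv_lt_one_iff₀]
    right
    exact Real.one_lt_rpow_iff_of_pos (by norm_num) |>.2 (Or.inl ⟨one_lt_two, hp⟩)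
  have hCp : (0:ℝ) < (4:ℝ)^p * (1 - (2:ℝ)^(-p))⁻¹ :=
    mul_pos (Real.rpow_pos_of_pos (by norm_num) p) (inv_pos.2 (by linarith))
  have hK : (0:ℝ) < 6 * (512*(n:ℝ))^n := by positivity
  refine ⟨(6 * (512*(n:ℝ))^n) * ((4:ℝ)^p * (1 - (2:ℝ)^(-p))⁻¹), mul_pos hK hCp, ?_⟩
  intro φ hφi hrad hmono hbd f hf H μ hμ0 _hfin
  set T : ℝ × Euc n → ℝ :=
    fun q => ∫ y, f y * ((q.1 ^ (-(n : ℝ)) : ℝ) * φ ((q.1)⁻¹ • (y - q.2))) with hT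
  set Mf : Euc n → ℝ≥0∞ :=
    fun x => ⨆ (q : ℝ × Euc n) (_ : 0 < q.1 ∧ ‖x - q.2‖ < q.1), ENNReal.ofReal |T q| with hMf
  have hTcont : ContinuousOn T {q : ℝ × Euc n | 0 < q.1} :=
    Tcont hn φ hφi hrad hmono hbd f hf H
  set Ek : ℤ → Set (ℝ × Euc n) := fun k => {q : ℝ × Euc n | 0 < q.1 ∧ (2:ℝ)^k < |T q|}
    with hEk
  set Ok : ℤ → Set (Euc n) := fun k => {x : Euc n | ENNReal.ofReal ((2:ℝ)^k) < Mf x} with hOk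
  have hEkopen : ∀ k : ℤ, IsOpen (Ek k) := by
    intro k
    have h1 : Ek k = {q : ℝ × Euc n | 0 < q.1} ∩ T ⁻¹' {t : ℝ | (2:ℝ)^k < |t|} := by
      ext q
      simp only [hEk, mem_setOf_eq, mem_inter_iff, mem_preimage]
    rw [h1]
    exact hTcont.isOpen_inter_preimage (isOpen_lt continuous_const continuous_fst)
      (isOpen_lt continuous_const continuous_abs)
  have hOkopen : ∀ k : ℤ, IsOpen (Ok k) := by
    intro k
    rw [hOk]
    exact isOpen_supLt (fun q : ℝ × Euc n => ENNReal.ofReal |T q|) (ENNReal.ofReal ((2:ℝ)^k))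
  have hEO : ∀ k : ℤ, ∀ q ∈ Ek k, 0 < q.1 ∧ ball q.2 q.1 ⊆ Ok k := by
    intro k q hq
    obtain ⟨hq1, hqk⟩ := hq
    refine ⟨hq1, fun x hx => ?_⟩
    have h1 : ENNReal.ofReal ((2:ℝ)^k) < ENNReal.ofReal |T q| :=
      (ENNReal.ofReal_lt_ofReal_iff (lt_of_le_of_lt (by positivity) hqk)).2 hqk
    have h2 : ENNReal.ofReal |T q| ≤ Mf x := by
      rw [hMf]
      exact le_supF (fun q' : ℝ × Euc n => ENNReal.ofReal |T q'|) x q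
        ⟨hq1, by rw [← dist_eq_norm]; exact mem_ball.1 hx⟩
    exact lt_of_lt_of_le h1 h2
  -- pointwise dyadic bound
  have hptwise : ∀ q : ℝ × Euc n, 0 < q.1 →
      (ENNReal.ofReal |T q|) ^ p ≤ ∑' k : ℤ,
        (Ek k).indicator (fun _ => (ENNReal.ofReal ((2:ℝ)^(k+2))) ^ p) q := by
    intro q hq1
    rcases eq_or_lt_of_le (abs_nonneg (T q)) with h0 | h0
    · rw [← h0]
      simp [ENNReal.zero_rpow_of_pos hp]
    · obtain ⟨k', hk1, hk2⟩ := exists_dyadic h0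
      have hq2 : (0:ℝ) < (2:ℝ)^k' := by positivity
      have hqE : q ∈ Ek (k'-1) := by
        refine ⟨hq1, ?_⟩
        have he : (2:ℝ)^(k'-1) = (2:ℝ)^k' / 2 := zpow_sub_one₀ (by norm_num) k'
        rw [he]
        linarith
      have hterm : (ENNReal.ofReal |T q|) ^ p
          ≤ (Ek (k'-1)).indicator (fun _ => (ENNReal.ofReal ((2:ℝ)^((k'-1)+2))) ^ p) q := by
        rw [Set.indicator_of_mem hqE]
        apply ENNReal.rpow_le_rpow _ hp.le
        apply ENNReal.ofReal_le_ofReal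
        have he : (2:ℝ)^((k'-1)+2) = 2 * (2:ℝ)^k' := by
          rw [show (k'-1)+2 = k'+1 by ring, zpow_add_one₀ (by norm_num : (2:ℝ) ≠ 0) k']
          ring
        rw [he]
        linarith
      exact hterm.trans (ENNReal.le_tsum (k'-1))
  have hae : ∀ᵐ q ∂μ, 0 < q.1 := by
    rw [ae_iff]
    simp only [not_lt]
    exact hμ0
  have hc_ne_top : ∀ k : ℤ, (ENNReal.ofReal ((2:ℝ)^(k+2))) ^ p ≠ ⊤ :=
    fun k => ENNReal.rpow_ne_top_of_nonneg hp.le ENNReal.ofReal_ne_top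
  calc ∫⁻ q, (ENNReal.ofReal |T q|) ^ p ∂μ
      ≤ ∫⁻ q, (∑' k : ℤ,
          (Ek k).indicator (fun _ => (ENNReal.ofReal ((2:ℝ)^(k+2))) ^ p) q) ∂μ := by
        apply lintegral_mono_ae
        filter_upwards [hae] with q hq using hptwise q hq
    _ = ∑' k : ℤ, ∫⁻ q, (Ek k).indicator (fun _ => (ENNReal.ofReal ((2:ℝ)^(k+2))) ^ p) q ∂μ :=
        lintegral_tsum fun k =>
          (measurable_const.indicator (hEkopen k).measurableSet).aemeasurable
    _ = ∑' k : ℤ, (ENNReal.ofReal ((2:ℝ)^(k+2))) ^ p * μ (Ek k) := by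
        apply tsum_congr
        intro k
        rw [lintegral_indicator_const (hEkopen k).measurableSet]
    _ ≤ ∑' k : ℤ, (ENNReal.ofReal ((2:ℝ)^(k+2))) ^ p *
          (ENNReal.ofReal (6 * (512*(n:ℝ))^n) *
            ∫⁻ x in Ok k, carlesonSup μ x ∂(volume : Measure (Euc n))) :=
        ENNReal.tsum_le_tsum fun k => mul_le_mul_right
          (covering hn μ (Ok k) (hOkopen k).measurableSet (Ek k) (hEO k)) _
    _ = ENNReal.ofReal (6 * (512*(n:ℝ))^n) * ∑' k : ℤ,
          ∫⁻ x, (Ok k).indicator (fun _ => (ENNReal.ofReal ((2:ℝ)^(k+2))) ^ p) x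
            * carlesonSup μ x ∂(volume : Measure (Euc n)) := by
        rw [← ENNReal.tsum_mul_left]
        apply tsum_congr
        intro k
        rw [mul_left_comm]
        congr 1
        have hind : (fun x => (Ok k).indicator (fun _ => (ENNReal.ofReal ((2:ℝ)^(k+2))) ^ p) x
            * carlesonSup μ x)
            = fun x => (Ok k).indicator
                (fun x' => (ENNReal.ofReal ((2:ℝ)^(k+2))) ^ p * carlesonSup μ x') x := by
          funext x
          classical
          by_cases hx : x ∈ Ok k
          · rw [Set.indicator_of_mem hx, Set.indicator_of_mem hx]
          · rw [Set.indicator_of_notMem hx, Set.indicator_of_notMem hx, zero_mul]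
        rw [hind, lintegral_indicator (hOkopen k).measurableSet,
          lintegral_const_mul' _ _ (hc_ne_top k)]
    _ = ENNReal.ofReal (6 * (512*(n:ℝ))^n) *
          ∫⁻ x, (∑' k : ℤ, (Ok k).indicator (fun _ => (ENNReal.ofReal ((2:ℝ)^(k+2))) ^ p) x
            * carlesonSup μ x) ∂(volume : Measure (Euc n)) := by
        congr 1
        rw [← lintegral_tsum]
        intro k
        exact ((measurable_const.indicator (hOkopen k).measurableSet).mul
          (measurable_carlesonSup μ)).aemeasurable
    _ ≤ ENNReal.ofReal (6 * (512*(n:ℝ))^n) *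
          ∫⁻ x, ENNReal.ofReal ((4:ℝ)^p * (1 - (2:ℝ)^(-p))⁻¹)
            * (Mf x ^ p * carlesonSup μ x) ∂(volume : Measure (Euc n)) := by
        apply mul_le_mul_right
        apply lintegral_mono
        intro x
        show (∑' k : ℤ, (Ok k).indicator (fun _ => (ENNReal.ofReal ((2:ℝ)^(k+2))) ^ p) x
            * carlesonSup μ x)
          ≤ ENNReal.ofReal ((4:ℝ)^p * (1 - (2:ℝ)^(-p))⁻¹) * (Mf x ^ p * carlesonSup μ x)
        rw [ENNReal.tsum_mul_right]
        have hmatch : (∑' k : ℤ, (Ok k).indicator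
              (fun _ => (ENNReal.ofReal ((2:ℝ)^(k+2))) ^ p) x)
            = ∑' k : ℤ, (if ENNReal.ofReal ((2:ℝ)^k) < Mf x
                then (ENNReal.ofReal ((2:ℝ)^(k+2)))^p else 0) := by
          apply tsum_congr
          intro k
          rw [Set.indicator_apply]
          rfl
        rw [hmatch, ← mul_assoc]
        exact mul_le_mul_left (geom_sum hp (Mf x)) _
    _ = ENNReal.ofReal ((6 * (512*(n:ℝ))^n) * ((4:ℝ)^p * (1 - (2:ℝ)^(-p))⁻¹)) *
          ∫⁻ x, Mf x ^ p * carlesonSup μ x ∂(volume : Measure (Euc n)) := by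
        rw [lintegral_const_mul' _ _ ENNReal.ofReal_ne_top, ← mul_assoc,
          ← ENNReal.ofReal_mul hK.le]


end
end

section
/- Let n ≥ 1 and let T be a compact linear operator on L²(ℝⁿ). Then for every bounded set 𝓑 ⊆ C_c^∞(ℝⁿ) and every f ∈ 𝓑, lim_{(a,b)→∞} sup_{g∈𝓑} |⟨Tf_{(a,b)}, g_{(a,b)}⟩| = 0; that is, T is weakly compact. -/
open MeasureTheory Metric Set
open scoped ENNReal

noncomputable section

/-! ### Auxiliary lemmas -/

section AuxLemmas

local notation "⟪" x ", " y "⟫" => @inner ℂ _ _ x y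

lemma pairing_eq_inner {n : ℕ} {u v : Euc n → ℂ}
    (hu : MemLp u 2 (volume : Measure (Euc n)))
    (hv : MemLp v 2 (volume : Measure (Euc n))) :
    pairing u v = (starRingEnd ℂ) ⟪(hu.toLp u : L2 n), hv.toLp v⟫ := by
  rw [MeasureTheory.L2.inner_def, ← integral_conj]
  refine integral_congr_ae ?_
  filter_upwards [hu.coeFn_toLp, hv.coeFn_toLp] with x hx hy
  rw [RCLike.inner_apply, hx, hy, map_mul, Complex.conj_conj, mul_comm]

lemma pairing_coe_eq_inner {n : ℕ} (x : L2 n) {v : Euc n → ℂ}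
    (hv : MemLp v 2 (volume : Measure (Euc n))) :
    pairing (⇑x) v = (starRingEnd ℂ) ⟪x, hv.toLp v⟫ := by
  rw [pairing_eq_inner (MeasureTheory.Lp.memLp x) hv, MeasureTheory.Lp.toLp_coeFn]

lemma dil_eq_zero {n : ℕ} {g : Euc n → ℂ} {p : ℝ × Euc n} (hp : 0 < p.1) {R₀ : ℝ}
    (hsupp : tsupport g ⊆ closedBall 0 R₀) :
    ∀ x ∉ closedBall p.2 (p.1 * R₀), dil g p x = 0 := by
  intro x hx
  have hx' : p.1 * R₀ < ‖x - p.2‖ := by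
    rw [Metric.mem_closedBall, not_le, dist_eq_norm] at hx
    exact hx
  have hmem : (p.1)⁻¹ • (x - p.2) ∉ tsupport g := by
    intro hmem
    have h1 := hsupp hmem
    rw [Metric.mem_closedBall, dist_zero_right, norm_smul, Real.norm_eq_abs,
      abs_of_pos (inv_pos.mpr hp)] at h1
    rw [inv_mul_le_iff₀ hp] at h1
    linarith
  unfold dil
  rw [image_eq_zero_of_notMem_tsupport hmem, smul_zero]

lemma norm_dil_le {n : ℕ} {g : Euc n → ℂ} {p : ℝ × Euc n} (hp : 0 < p.1) {M₀ : ℝ}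
    (hbd : ∀ x, ‖g x‖ ≤ M₀) (x : Euc n) :
    ‖dil g p x‖ ≤ p.1 ^ (-(n : ℝ) / 2) * M₀ := by
  unfold dil
  rw [norm_smul, Real.norm_eq_abs, abs_of_pos (Real.rpow_pos_of_pos hp _)]
  exact mul_le_mul_of_nonneg_left (hbd _) (Real.rpow_nonneg hp.le _)

lemma memℒp_dil {n : ℕ} {g : Euc n → ℂ} {p : ℝ × Euc n} (hp : 0 < p.1)
    (hg : Continuous g) {R₀ : ℝ} (hsupp : tsupport g ⊆ closedBall 0 R₀) :
    MemLp (dil g p) 2 (volume : Measure (Euc n)) := by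
  have hc : Continuous (dil g p) :=
    (hg.comp ((continuous_id.sub continuous_const).const_smul ((p.1)⁻¹))).const_smul (p.1 ^ (-(n : ℝ) / 2) : ℝ)
  have hcs : HasCompactSupport (dil g p) :=
    HasCompactSupport.intro (isCompact_closedBall p.2 (p.1 * R₀)) (dil_eq_zero hp hsupp)
  exact hc.memLp_of_hasCompactSupport hcs

lemma norm_toLp_dil_le {n : ℕ} {g : Euc n → ℂ} {p : ℝ × Euc n} (hp : 0 < p.1)
    {R₀ M₀ : ℝ} (hR₀ : 0 ≤ R₀) (hM₀ : 0 ≤ M₀)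
    (hsupp : tsupport g ⊆ closedBall 0 R₀) (hbd : ∀ x, ‖g x‖ ≤ M₀)
    (hmem : MemLp (dil g p) 2 (volume : Measure (Euc n))) :
    ‖hmem.toLp (dil g p)‖
      ≤ M₀ * Real.sqrt (R₀ ^ n * (volume (Metric.ball (0:Euc n) 1)).toReal) := by
  have hC : (0:ℝ) ≤ p.1 ^ (-(n : ℝ)/2) * M₀ := mul_nonneg (Real.rpow_nonneg hp.le _) hM₀
  have hzero := dil_eq_zero hp hsupp
  have hptw : ∀ x, ‖dil g p x‖
      ≤ ‖(closedBall p.2 (p.1 * R₀)).indicator (fun _ => p.1 ^ (-(n : ℝ)/2) * M₀) x‖ := by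
    intro x
    by_cases hx : x ∈ closedBall p.2 (p.1 * R₀)
    · rw [Set.indicator_of_mem hx, Real.norm_eq_abs, abs_of_nonneg hC]
      exact norm_dil_le hp hbd x
    · rw [hzero x hx]
      simp
  have h1 : eLpNorm (dil g p) 2 (volume : Measure (Euc n))
      ≤ eLpNorm ((closedBall p.2 (p.1 * R₀)).indicator
          (fun _ => p.1 ^ (-(n : ℝ)/2) * M₀)) 2 volume :=
    eLpNorm_mono hptw
  rw [eLpNorm_indicator_const measurableSet_closedBall two_ne_zero ENNReal.ofNat_ne_top] at h1
  have hvol : volume (closedBall p.2 (p.1 * R₀))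
      = ENNReal.ofReal ((p.1 * R₀) ^ n) * volume (Metric.ball (0:Euc n) 1) := by
    rw [MeasureTheory.Measure.addHaar_closedBall _ _ (mul_nonneg hp.le hR₀),
      finrank_euclideanSpace_fin]
  rw [hvol] at h1
  have hVne : volume (Metric.ball (0:Euc n) 1) ≠ ⊤ := measure_ball_lt_top.ne
  have hRHSne : (‖p.1 ^ (-(n : ℝ)/2) * M₀‖₊ : ℝ≥0∞) *
      (ENNReal.ofReal ((p.1 * R₀) ^ n) * volume (Metric.ball (0:Euc n) 1))
        ^ (1 / (2 : ℝ≥0∞).toReal) ≠ ⊤ := by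
    apply ENNReal.mul_ne_top ENNReal.coe_ne_top
    apply ENNReal.rpow_ne_top_of_nonneg (by norm_num)
    exact ENNReal.mul_ne_top ENNReal.ofReal_ne_top hVne
  rw [MeasureTheory.Lp.norm_toLp]
  refine (ENNReal.toReal_mono hRHSne h1).trans ?_
  have hVnn : (0:ℝ) ≤ (volume (Metric.ball (0:Euc n) 1)).toReal := ENNReal.toReal_nonneg
  have hpowR : (0:ℝ) ≤ (p.1 * R₀) ^ n := pow_nonneg (mul_nonneg hp.le hR₀) n
  have htoReal : ((‖p.1 ^ (-(n : ℝ)/2) * M₀‖₊ : ℝ≥0∞) *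
      (ENNReal.ofReal ((p.1 * R₀) ^ n) * volume (Metric.ball (0:Euc n) 1))
        ^ (1 / (2 : ℝ≥0∞).toReal)).toReal
      = (p.1 ^ (-(n : ℝ)/2) * M₀) *
        ((p.1 * R₀) ^ n * (volume (Metric.ball (0:Euc n) 1)).toReal) ^ ((1:ℝ)/2) := by
    rw [ENNReal.toReal_mul, ← ENNReal.toReal_rpow, ENNReal.toReal_mul,
      ENNReal.toReal_ofReal hpowR, ENNReal.coe_toReal, coe_nnnorm, Real.norm_eq_abs,
      abs_of_nonneg hC]
    norm_num
  rw [htoReal]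
  set V : ℝ := (volume (Metric.ball (0:Euc n) 1)).toReal with hVdef
  have h1' : ((p.1 * R₀) ^ n * V) = p.1 ^ n * (R₀ ^ n * V) := by
    rw [mul_pow]; ring
  have hR₀V : (0:ℝ) ≤ R₀ ^ n * V := mul_nonneg (pow_nonneg hR₀ n) hVnn
  rw [h1', Real.mul_rpow (pow_nonneg hp.le n) hR₀V,
    ← Real.rpow_natCast p.1 n, ← Real.rpow_mul hp.le, Real.sqrt_eq_rpow]
  rw [show p.1 ^ (-(n:ℝ)/2) * M₀ * (p.1 ^ ((n:ℝ) * (1/2)) * (R₀ ^ n * V) ^ ((1:ℝ)/2))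
      = (p.1 ^ (-(n:ℝ)/2) * p.1 ^ ((n:ℝ) * (1/2))) * (M₀ * (R₀ ^ n * V) ^ ((1:ℝ)/2)) from by
        ring]
  rw [← Real.rpow_add hp, show (-(n:ℝ)/2 + (n:ℝ) * (1/2)) = 0 from by ring,
    Real.rpow_zero, one_mul]

lemma norm_pairing_le_of_bound {n : ℕ} {u v : Euc n → ℂ} {s : Set (Euc n)}
    (hs : MeasurableSet s) (hfin : volume s ≠ ⊤) {C : ℝ} (hC : 0 ≤ C)
    (hbd : ∀ x, ‖u x * (starRingEnd ℂ) (v x)‖ ≤ s.indicator (fun _ => C) x) :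
    ‖pairing u v‖ ≤ C * (volume s).toReal := by
  have h1 : ‖pairing u v‖
      ≤ (∫⁻ x, ENNReal.ofReal ‖u x * (starRingEnd ℂ) (v x)‖
          ∂(volume : Measure (Euc n))).toReal :=
    MeasureTheory.norm_integral_le_lintegral_norm _
  have h2 : (∫⁻ x, ENNReal.ofReal ‖u x * (starRingEnd ℂ) (v x)‖ ∂(volume : Measure (Euc n)))
      ≤ ENNReal.ofReal C * volume s := by
    rw [← lintegral_indicator_const hs (ENNReal.ofReal C)]
    refine lintegral_mono fun x => ?_
    by_cases hx : x ∈ s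
    · rw [Set.indicator_of_mem hx]
      refine ENNReal.ofReal_le_ofReal ?_
      have := hbd x
      rwa [Set.indicator_of_mem hx] at this
    · rw [Set.indicator_of_notMem hx]
      have hb := hbd x
      rw [Set.indicator_of_notMem hx] at hb
      simp [le_antisymm hb (norm_nonneg _)]
      simpa using norm_le_zero_iff.mp hb
  refine h1.trans ?_
  have h3 := ENNReal.toReal_mono (ENNReal.mul_ne_top ENNReal.ofReal_ne_top hfin) h2
  rwa [ENNReal.toReal_mul, ENNReal.toReal_ofReal hC] at h3

lemma arcosh_le {x y : ℝ} (hx : 1 ≤ x) (hxy : x ≤ y) :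
    arcosh x ≤ Real.log 2 + Real.log y := by
  have hx0 : 0 < x := lt_of_lt_of_le one_pos hx
  have hs : Real.sqrt (x ^ 2 - 1) ≤ x := by
    calc Real.sqrt (x ^ 2 - 1) ≤ Real.sqrt (x ^ 2) := Real.sqrt_le_sqrt (by nlinarith)
      _ = x := Real.sqrt_sq hx0.le
  have h2 : x + Real.sqrt (x ^ 2 - 1) ≤ 2 * y := by nlinarith [Real.sqrt_nonneg (x ^ 2 - 1)]
  have hpos : 0 < x + Real.sqrt (x ^ 2 - 1) := by positivity
  calc arcosh x = Real.log (x + Real.sqrt (x ^ 2 - 1)) := rfl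
    _ ≤ Real.log (2 * y) := Real.log_le_log hpos h2
    _ = Real.log 2 + Real.log y := Real.log_mul two_ne_zero (by nlinarith)

lemma far_out {n : ℕ} {α A β : ℝ} (hα : 0 < α) (hA : 1 ≤ A) (hβ : 0 ≤ β) {p : ℝ × Euc n}
    (hfar : p ∈ farFrom (basePt n)
      (Real.log 2 + Real.log (1 + ((1 + A) ^ 2 + β ^ 2) / (2 * α)) + 1)) :
    p.1 ≤ α ∨ A ≤ p.1 ∨ (p.1 < A ∧ β < ‖p.2‖) := by
  obtain ⟨hp, hd⟩ := hfar
  by_cases h1 : p.1 ≤ α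
  · exact Or.inl h1
  by_cases h2 : A ≤ p.1
  · exact Or.inr (Or.inl h2)
  push_neg at h1 h2
  refine Or.inr (Or.inr ⟨h2, ?_⟩)
  by_contra hb
  push_neg at hb
  have hx : hypDist (basePt n) p
      = arcosh (1 + (|1 - p.1| ^ 2 + ‖p.2‖ ^ 2) / (2 * 1 * p.1)) := by
    simp only [hypDist, basePt, zero_sub, norm_neg]
  have hx1 : 1 ≤ 1 + (|1 - p.1| ^ 2 + ‖p.2‖ ^ 2) / (2 * 1 * p.1) := by
    have : 0 ≤ (|1 - p.1| ^ 2 + ‖p.2‖ ^ 2) / (2 * 1 * p.1) := by positivity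
    linarith
  have hxle : 1 + (|1 - p.1| ^ 2 + ‖p.2‖ ^ 2) / (2 * 1 * p.1)
      ≤ 1 + ((1 + A) ^ 2 + β ^ 2) / (2 * α) := by
    have hnum : |1 - p.1| ^ 2 + ‖p.2‖ ^ 2 ≤ (1 + A) ^ 2 + β ^ 2 := by
      have ha : |1 - p.1| ≤ 1 + A := by
        rw [abs_le]; constructor <;> nlinarith
      have hh1 : |1 - p.1| ^ 2 ≤ (1 + A) ^ 2 := by nlinarith [abs_nonneg (1 - p.1)]
      have hh2 : ‖p.2‖ ^ 2 ≤ β ^ 2 := by nlinarith [norm_nonneg p.2]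
      linarith
    have hden : 2 * α ≤ 2 * 1 * p.1 := by nlinarith
    have := div_le_div₀ (by positivity) hnum (by positivity) hden
    linarith
  have hub := arcosh_le hx1 hxle
  rw [hx] at hd
  linarith

lemma weak_vanish {n : ℕ} (hn : 1 ≤ n) (y : L2 n) {R₀ M₀ : ℝ} (hR₀ : 0 ≤ R₀) (hM₀ : 0 ≤ M₀)
    {ε : ℝ} (hε : 0 < ε) :
    ∃ R : ℝ, ∀ p ∈ farFrom (basePt n) R, ∀ g : Euc n → ℂ, Continuous g →
      tsupport g ⊆ closedBall 0 R₀ → (∀ x, ‖g x‖ ≤ M₀) →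
      ‖pairing (⇑y) (dil g p)‖ < ε := by
  set V : ℝ := (volume (Metric.ball (0:Euc n) 1)).toReal with hVdef
  have hVnn : 0 ≤ V := ENNReal.toReal_nonneg
  set C₂ : ℝ := M₀ * Real.sqrt (R₀ ^ n * V) with hC₂def
  have hC₂nn : 0 ≤ C₂ := mul_nonneg hM₀ (Real.sqrt_nonneg _)
  have hC₂1 : (0:ℝ) < C₂ + 1 := by linarith
  have hεq : (0:ℝ) < ε / (4 * (C₂ + 1)) := div_pos hε (by linarith)
  obtain ⟨h₀, h₀cs, h₀close, h₀cont, h₀mem⟩ :=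
    (MeasureTheory.Lp.memLp y).exists_hasCompactSupport_eLpNorm_sub_le
      ENNReal.ofNat_ne_top
      (ε := ENNReal.ofReal (ε / (4 * (C₂ + 1)))) (by
        simp only [ne_eq, ENNReal.ofReal_eq_zero, not_le]
        exact hεq)
  obtain ⟨M', hM'⟩ := h₀cs.isBounded.subset_closedBall 0
  set M : ℝ := max M' 0 with hMdef
  have hM0 : 0 ≤ M := le_max_right _ _
  have hMsupp : tsupport h₀ ⊆ closedBall 0 M :=
    hM'.trans (closedBall_subset_closedBall (le_max_left _ _))
  obtain ⟨L', hL'⟩ := h₀cont.bounded_above_of_compact_support h₀cs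
  set L : ℝ := max L' 0 with hLdef
  have hL0 : 0 ≤ L := le_max_right _ _
  have hL : ∀ x, ‖h₀ x‖ ≤ L := fun x => (hL' x).trans (le_max_left _ _)
  set VM : ℝ := (volume (closedBall (0:Euc n) M)).toReal with hVMdef
  have hVMnn : 0 ≤ VM := ENNReal.toReal_nonneg
  set D₁ : ℝ := L * M₀ * R₀ ^ n * V + 1 with hD₁def
  have hD₁aux : (0:ℝ) ≤ L * M₀ * R₀ ^ n * V :=
    mul_nonneg (mul_nonneg (mul_nonneg hL0 hM₀) (pow_nonneg hR₀ n)) hVnn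
  have hD₁pos : 0 < D₁ := by rw [hD₁def]; linarith
  set D₂ : ℝ := L * M₀ * VM + 1 with hD₂def
  have hD₂aux : (0:ℝ) ≤ L * M₀ * VM := mul_nonneg (mul_nonneg hL0 hM₀) hVMnn
  have hD₂pos : 0 < D₂ := by rw [hD₂def]; linarith
  have hεD₁ : 0 < ε / (4 * D₁) := div_pos hε (by linarith)
  have hεD₂ : 0 < ε / (4 * D₂) := div_pos hε (by linarith)
  set α : ℝ := min 1 ((ε / (4 * D₁)) ^ (2:ℝ)) with hαdef
  have hαpos : 0 < α := lt_min one_pos (Real.rpow_pos_of_pos hεD₁ _)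
  have hα1 : α ≤ 1 := min_le_left _ _
  set A : ℝ := max 1 ((4 * D₂ / ε) ^ (2:ℝ)) with hAdef
  have hA1 : 1 ≤ A := le_max_left _ _
  set β : ℝ := M + A * R₀ with hβdef
  have hβ0 : 0 ≤ β := by
    have : (0:ℝ) ≤ A * R₀ := mul_nonneg (by linarith) hR₀
    rw [hβdef]; linarith
  refine ⟨Real.log 2 + Real.log (1 + ((1 + A) ^ 2 + β ^ 2) / (2 * α)) + 1, ?_⟩
  intro p hfar g hgc hgs hgb
  have hp : 0 < p.1 := hfar.1
  have hv : MemLp (dil g p) 2 (volume : Measure (Euc n)) := memℒp_dil hp hgc hgs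
  have hvn : ‖hv.toLp (dil g p)‖ ≤ C₂ := by
    rw [hC₂def, hVdef]
    exact norm_toLp_dil_le hp hR₀ hM₀ hgs hgb hv
  have hEq : pairing (⇑y) (dil g p) = (starRingEnd ℂ) ⟪y, hv.toLp (dil g p)⟫ :=
    pairing_coe_eq_inner y hv
  have hsplit : ⟪y, hv.toLp (dil g p)⟫
      = ⟪y - h₀mem.toLp h₀, hv.toLp (dil g p)⟫ + ⟪h₀mem.toLp h₀, hv.toLp (dil g p)⟫ := by
    rw [inner_sub_left]; ring
  have hT1 : ‖⟪y - h₀mem.toLp h₀, hv.toLp (dil g p)⟫‖ ≤ ε / 4 := by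
    have hyh : ‖y - h₀mem.toLp h₀‖ ≤ ε / (4 * (C₂ + 1)) := by
      have heq : y - h₀mem.toLp h₀
          = ((MeasureTheory.Lp.memLp y).sub h₀mem).toLp (⇑y - h₀) := by
        rw [MeasureTheory.MemLp.toLp_sub, MeasureTheory.Lp.toLp_coeFn]
        exact MeasureTheory.Lp.memLp y
      rw [heq, MeasureTheory.Lp.norm_toLp]
      have h' := ENNReal.toReal_mono ENNReal.ofReal_ne_top h₀close
      rwa [ENNReal.toReal_ofReal hεq.le] at h'
    calc ‖⟪y - h₀mem.toLp h₀, hv.toLp (dil g p)⟫‖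
        ≤ ‖y - h₀mem.toLp h₀‖ * ‖hv.toLp (dil g p)‖ := norm_inner_le_norm _ _
      _ ≤ (ε / (4 * (C₂ + 1))) * (C₂ + 1) := by
          apply mul_le_mul hyh (by linarith) (norm_nonneg _) hεq.le
      _ = ε / 4 := by
          field_simp
  have hT2 : ‖pairing h₀ (dil g p)‖ ≤ ε / 4 := by
    have hCnn : (0:ℝ) ≤ p.1 ^ (-(n:ℝ)/2) * M₀ := mul_nonneg (Real.rpow_nonneg hp.le _) hM₀
    rcases far_out hαpos hA1 hβ0 hfar with hcase | hcase | hcase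
    · -- small scale
      have hvol : (volume (closedBall p.2 (p.1 * R₀))).toReal = (p.1 * R₀) ^ n * V := by
        rw [hVdef, MeasureTheory.Measure.addHaar_closedBall _ _ (mul_nonneg hp.le hR₀),
          finrank_euclideanSpace_fin, ENNReal.toReal_mul,
          ENNReal.toReal_ofReal (pow_nonneg (mul_nonneg hp.le hR₀) n)]
      have hbd : ∀ x, ‖h₀ x * (starRingEnd ℂ) (dil g p x)‖
          ≤ (closedBall p.2 (p.1 * R₀)).indicator
              (fun _ => L * (p.1 ^ (-(n:ℝ)/2) * M₀)) x := by
        intro x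
        by_cases hx : x ∈ closedBall p.2 (p.1 * R₀)
        · rw [Set.indicator_of_mem hx, norm_mul, RCLike.norm_conj]
          exact mul_le_mul (hL x) (norm_dil_le hp hgb x) (norm_nonneg _) hL0
        · rw [Set.indicator_of_notMem hx, dil_eq_zero hp hgs x hx]
          simp
      have h5 := norm_pairing_le_of_bound (u := h₀) (v := dil g p)
        measurableSet_closedBall measure_closedBall_lt_top.ne (mul_nonneg hL0 hCnn) hbd
      rw [hvol] at h5
      refine h5.trans ?_
      have hrw : L * (p.1 ^ (-(n:ℝ)/2) * M₀) * ((p.1 * R₀) ^ n * V)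
          = (L * M₀ * R₀ ^ n * V) * p.1 ^ ((n:ℝ)/2) := by
        rw [mul_pow, ← Real.rpow_natCast p.1 n,
          show L * (p.1 ^ (-(n:ℝ)/2) * M₀) * (p.1 ^ (n:ℝ) * R₀ ^ n * V)
            = (p.1 ^ (-(n:ℝ)/2) * p.1 ^ (n:ℝ)) * (L * M₀ * R₀ ^ n * V) from by ring,
          ← Real.rpow_add hp, show (-(n:ℝ)/2 + (n:ℝ)) = (n:ℝ)/2 from by ring]
        ring
      rw [hrw]
      have hax : p.1 ^ ((n:ℝ)/2) ≤ ε / (4 * D₁) := by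
        calc p.1 ^ ((n:ℝ)/2) ≤ p.1 ^ ((1:ℝ)/2) := by
              apply Real.rpow_le_rpow_of_exponent_ge hp (le_trans hcase hα1)
              have hcast : (1:ℝ) ≤ (n:ℝ) := by exact_mod_cast hn
              linarith
          _ ≤ ((ε / (4 * D₁)) ^ (2:ℝ)) ^ ((1:ℝ)/2) :=
              Real.rpow_le_rpow hp.le (le_trans hcase (min_le_right _ _)) (by norm_num)
          _ = ε / (4 * D₁) := by
              rw [← Real.rpow_mul hεD₁.le]
              norm_num
      calc (L * M₀ * R₀ ^ n * V) * p.1 ^ ((n:ℝ)/2)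
          ≤ D₁ * (ε / (4 * D₁)) := by
            apply mul_le_mul (by rw [hD₁def]; linarith) hax
              (Real.rpow_nonneg hp.le _) hD₁pos.le
        _ = ε / 4 := by
            field_simp
    · -- large scale
      have hbd : ∀ x, ‖h₀ x * (starRingEnd ℂ) (dil g p x)‖
          ≤ (closedBall (0:Euc n) M).indicator
              (fun _ => L * (p.1 ^ (-(n:ℝ)/2) * M₀)) x := by
        intro x
        by_cases hx : x ∈ closedBall (0:Euc n) M
        · rw [Set.indicator_of_mem hx, norm_mul, RCLike.norm_conj]
          exact mul_le_mul (hL x) (norm_dil_le hp hgb x) (norm_nonneg _) hL0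
        · rw [Set.indicator_of_notMem hx,
            image_eq_zero_of_notMem_tsupport (fun hmem => hx (hMsupp hmem))]
          simp
      have h5 := norm_pairing_le_of_bound (u := h₀) (v := dil g p)
        measurableSet_closedBall measure_closedBall_lt_top.ne (mul_nonneg hL0 hCnn) hbd
      rw [← hVMdef] at h5
      refine h5.trans ?_
      have ha1 : 1 ≤ p.1 := le_trans hA1 hcase
      have hax : p.1 ^ (-(n:ℝ)/2) ≤ ε / (4 * D₂) := by
        have step1 : p.1 ^ (-(n:ℝ)/2) ≤ p.1 ^ (-(1:ℝ)/2) := by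
          apply Real.rpow_le_rpow_of_exponent_le ha1
          have hcast : (1:ℝ) ≤ (n:ℝ) := by exact_mod_cast hn
          linarith
        have h4 : 4 * D₂ / ε ≤ p.1 ^ ((1:ℝ)/2) := by
          have hid : ((4 * D₂ / ε) ^ (2:ℝ)) ^ ((1:ℝ)/2) = 4 * D₂ / ε := by
            rw [← Real.rpow_mul (le_of_lt (div_pos (by linarith) hε))]
            norm_num
          calc 4 * D₂ / ε = ((4 * D₂ / ε) ^ (2:ℝ)) ^ ((1:ℝ)/2) := hid.symm
            _ ≤ p.1 ^ ((1:ℝ)/2) :=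
                Real.rpow_le_rpow (Real.rpow_nonneg (le_of_lt (div_pos (by linarith) hε)) _)
                  (le_trans (le_max_right _ _) hcase) (by norm_num)
        have step2 : p.1 ^ (-(1:ℝ)/2) ≤ ε / (4 * D₂) := by
          rw [show (-(1:ℝ)/2) = -((1:ℝ)/2) from by ring, Real.rpow_neg hp.le]
          have hinv := inv_anti₀ (div_pos (by linarith) hε) h4
          rwa [inv_div] at hinv
        exact step1.trans step2
      calc L * (p.1 ^ (-(n:ℝ)/2) * M₀) * VM
          = (L * M₀ * VM) * p.1 ^ (-(n:ℝ)/2) := by ring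
        _ ≤ D₂ * (ε / (4 * D₂)) := by
            apply mul_le_mul (by rw [hD₂def]; linarith) hax
              (Real.rpow_nonneg hp.le _) hD₂pos.le
        _ = ε / 4 := by
            field_simp
    · -- disjoint supports
      obtain ⟨haA, hbβ⟩ := hcase
      have hzero : (fun x => h₀ x * (starRingEnd ℂ) (dil g p x)) = fun _ => (0:ℂ) := by
        funext x
        by_cases hx : x ∈ closedBall p.2 (p.1 * R₀)
        · have hx0 : x ∉ closedBall (0:Euc n) M := by
            intro hx0
            rw [Metric.mem_closedBall, dist_eq_norm] at hx hx0
            rw [sub_zero] at hx0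
            have htri : ‖x - (x - p.2)‖ ≤ ‖x‖ + ‖x - p.2‖ := norm_sub_le _ _
            have hxx : x - (x - p.2) = p.2 := by abel
            rw [hxx] at htri
            have hAR : p.1 * R₀ ≤ A * R₀ := mul_le_mul_of_nonneg_right haA.le hR₀
            rw [hβdef] at hbβ
            linarith
          rw [image_eq_zero_of_notMem_tsupport (fun hmem => hx0 (hMsupp hmem)), zero_mul]
        · rw [dil_eq_zero hp hgs x hx, map_zero, mul_zero]
      have hpz : pairing h₀ (dil g p) = 0 := by
        unfold pairing
        rw [hzero, integral_zero]
      rw [hpz, norm_zero]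
      linarith
  rw [hEq, RCLike.norm_conj, hsplit]
  have hT2' : ‖⟪h₀mem.toLp h₀, hv.toLp (dil g p)⟫‖ ≤ ε / 4 := by
    have hpe : pairing h₀ (dil g p)
        = (starRingEnd ℂ) ⟪h₀mem.toLp h₀, hv.toLp (dil g p)⟫ :=
      pairing_eq_inner h₀mem hv
    calc ‖⟪h₀mem.toLp h₀, hv.toLp (dil g p)⟫‖
        = ‖(starRingEnd ℂ) ⟪h₀mem.toLp h₀, hv.toLp (dil g p)⟫‖ := (RCLike.norm_conj _).symm
      _ = ‖pairing h₀ (dil g p)‖ := by rw [← hpe]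
      _ ≤ ε / 4 := hT2
  calc ‖⟪y - h₀mem.toLp h₀, hv.toLp (dil g p)⟫ + ⟪h₀mem.toLp h₀, hv.toLp (dil g p)⟫‖
      ≤ ‖⟪y - h₀mem.toLp h₀, hv.toLp (dil g p)⟫‖ + ‖⟪h₀mem.toLp h₀, hv.toLp (dil g p)⟫‖ :=
        norm_add_le _ _
    _ ≤ ε / 4 + ε / 4 := add_le_add hT1 hT2'
    _ < ε := by linarith

end AuxLemmas

/-- every compact operator on L²(ℝⁿ) is weakly compact. -/
theorem statement5 (n : ℕ) (hn : 1 ≤ n) (T : L2 n →L[ℂ] L2 n)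
    (hT : IsCompactOperator (⇑T)) : WeaklyCompact T := by
  intro B hB f hf ε hε
  obtain ⟨hsm, ⟨R₀', hR'⟩, hbd⟩ := hB
  obtain ⟨M₀', hM₀'⟩ := hbd 0
  set R₀ : ℝ := max R₀' 0 with hR₀def
  have hR₀0 : 0 ≤ R₀ := le_max_right _ _
  set M₀ : ℝ := max M₀' 0 with hM₀def
  have hM₀0 : 0 ≤ M₀ := le_max_right _ _
  have hsupp : ∀ g ∈ B, tsupport g ⊆ closedBall 0 R₀ :=
    fun g hg => (hR' g hg).trans (closedBall_subset_closedBall (le_max_left _ _))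
  have hnorm : ∀ g ∈ B, ∀ x, ‖g x‖ ≤ M₀ := by
    intro g hg x
    have h := hM₀' g hg x
    rw [norm_iteratedFDeriv_zero] at h
    exact h.trans (le_max_left _ _)
  have hcont : ∀ g ∈ B, Continuous g := fun g hg => (hsm g hg).continuous
  set V : ℝ := (volume (Metric.ball (0:Euc n) 1)).toReal with hVdef
  set C₂ : ℝ := M₀ * Real.sqrt (R₀ ^ n * V) with hC₂def
  have hC₂nn : 0 ≤ C₂ := mul_nonneg hM₀0 (Real.sqrt_nonneg _)
  have hε₁ : 0 < ε / (2 * (C₂ + 1)) := div_pos hε (by linarith)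
  have hK : IsCompact (closure (⇑T '' closedBall 0 (C₂ + 1))) := by
    have h := IsCompactOperator.isCompact_closure_image_closedBall
      (𝕜₁ := ℂ) (f := (T : L2 n →ₗ[ℂ] L2 n)) hT (C₂ + 1)
    rwa [ContinuousLinearMap.coe_coe] at h
  obtain ⟨t, htfin, htcover⟩ := (Metric.totallyBounded_iff.mp hK.totallyBounded)
    (ε / (2 * (C₂ + 1))) hε₁
  have hchoice : ∀ z : L2 n, ∃ R : ℝ, ∀ p ∈ farFrom (basePt n) R, ∀ g : Euc n → ℂ,
      Continuous g → tsupport g ⊆ closedBall 0 R₀ → (∀ x, ‖g x‖ ≤ M₀) →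
      ‖pairing (⇑z) (dil g p)‖ < ε / 2 := fun z =>
    weak_vanish hn z hR₀0 hM₀0 (by linarith)
  choose Rf hRf using hchoice
  obtain ⟨Rstar, hRstar⟩ := (htfin.image Rf).bddAbove
  refine ⟨Rstar, ?_⟩
  intro p hfar g hg
  have hp : 0 < p.1 := hfar.1
  have hfm : MemLp (dil f p) 2 (volume : Measure (Euc n)) :=
    memℒp_dil hp (hcont f hf) (hsupp f hf)
  have htoL2 : toL2 (dil f p) = hfm.toLp (dil f p) := dif_pos hfm
  have hfnorm : ‖hfm.toLp (dil f p)‖ ≤ C₂ := by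
    rw [hC₂def, hVdef]
    exact norm_toLp_dil_le hp hR₀0 hM₀0 (hsupp f hf) (hnorm f hf) hfm
  have hmemK : T (hfm.toLp (dil f p)) ∈ closure (⇑T '' closedBall 0 (C₂ + 1)) :=
    subset_closure ⟨_, by rw [mem_closedBall_zero_iff]; linarith, rfl⟩
  obtain ⟨z, hzt, hz⟩ := Set.mem_iUnion₂.mp (htcover hmemK)
  have hv : MemLp (dil g p) 2 (volume : Measure (Euc n)) :=
    memℒp_dil hp (hcont g hg) (hsupp g hg)
  have hvn : ‖hv.toLp (dil g p)‖ ≤ C₂ := by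
    rw [hC₂def, hVdef]
    exact norm_toLp_dil_le hp hR₀0 hM₀0 (hsupp g hg) (hnorm g hg) hv
  rw [htoL2]
  have hEq : pairing (⇑(T (hfm.toLp (dil f p)))) (dil g p)
      = (starRingEnd ℂ)
          (@inner ℂ _ _ (T (hfm.toLp (dil f p))) (hv.toLp (dil g p))) :=
    pairing_coe_eq_inner _ hv
  have hsplit : (@inner ℂ _ _ (T (hfm.toLp (dil f p))) (hv.toLp (dil g p)))
      = @inner ℂ _ _ (T (hfm.toLp (dil f p)) - z) (hv.toLp (dil g p))
        + @inner ℂ _ _ z (hv.toLp (dil g p)) := by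
    rw [inner_sub_left]; ring
  have hT1 : ‖@inner ℂ _ _ (T (hfm.toLp (dil f p)) - z) (hv.toLp (dil g p))‖ < ε / 2 := by
    have hd : ‖T (hfm.toLp (dil f p)) - z‖ < ε / (2 * (C₂ + 1)) := by
      rw [← dist_eq_norm]
      exact Metric.mem_ball.mp hz
    calc ‖@inner ℂ _ _ (T (hfm.toLp (dil f p)) - z) (hv.toLp (dil g p))‖
        ≤ ‖T (hfm.toLp (dil f p)) - z‖ * ‖hv.toLp (dil g p)‖ := norm_inner_le_norm _ _
      _ ≤ ‖T (hfm.toLp (dil f p)) - z‖ * (C₂ + 1) :=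
          mul_le_mul_of_nonneg_left (by linarith) (norm_nonneg _)
      _ < (ε / (2 * (C₂ + 1))) * (C₂ + 1) :=
          mul_lt_mul_of_pos_right hd (by linarith)
      _ = ε / 2 := by field_simp
  have hT2 : ‖@inner ℂ _ _ z (hv.toLp (dil g p))‖ < ε / 2 := by
    have hzfar : p ∈ farFrom (basePt n) (Rf z) :=
      ⟨hfar.1, le_trans (hRstar (Set.mem_image_of_mem Rf hzt)) hfar.2⟩
    have hzz := hRf z p hzfar g (hcont g hg) (hsupp g hg) (hnorm g hg)
    rwa [pairing_coe_eq_inner z hv, RCLike.norm_conj] at hzz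
  rw [hEq, RCLike.norm_conj, hsplit]
  calc ‖@inner ℂ _ _ (T (hfm.toLp (dil f p)) - z) (hv.toLp (dil g p))
        + @inner ℂ _ _ z (hv.toLp (dil g p))‖
      ≤ ‖@inner ℂ _ _ (T (hfm.toLp (dil f p)) - z) (hv.toLp (dil g p))‖
        + ‖@inner ℂ _ _ z (hv.toLp (dil g p))‖ := norm_add_le _ _
    _ < ε / 2 + ε / 2 := add_lt_add hT1 hT2
    _ = ε := by ring

end
end
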